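/- arXiv:0811.2156 — 5 statements merged into one kernel-verified Lean document; each statement's English description precedes it below -/
import Mathlib

section
/- Let A be a hypersolvable central arrangement in ℂ^l admitting a composition series of length ℓ. Then A is supersolvable if and only if ℓ = r(A). -/
/-! Common notions for central hyperplane arrangements, given by a family
`f : ι → Module.Dual ℂ V` of defining linear functionals (one per hyperplane). -/

variable {V : Type*} [AddCommGroup V] [Module ℂ V]

/-- The intersection lattice of the subarrangement indexed by the finite set `B`:
all intersections of subfamilies of kernels (the empty intersection being `⊤ = V`). -/
def arrLatticeOn {ι : Type*} (f : ι → Module.Dual ℂ V) (B : Finset ι) :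
    Set (Submodule ℂ V) :=
  {X | ∃ S : Finset ι, S ⊆ B ∧ X = S.inf fun i => LinearMap.ker (f i)}

/-- The rank (codimension) of an element of the intersection lattice. -/
noncomputable def arrCorank (X : Submodule ℂ V) : ℕ :=
  Module.finrank ℂ (V ⧸ X)

/-- The rank of the subarrangement indexed by `B`: the maximal rank occurring in its
intersection lattice. -/
noncomputable def arrRankOn {ι : Type*} (f : ι → Module.Dual ℂ V) (B : Finset ι) : ℕ :=
  sSup (arrCorank '' arrLatticeOn f B)

/-- The intersection lattice of the whole arrangement. -/
def arrLattice {ι : Type*} [Fintype ι] (f : ι → Module.Dual ℂ V) :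
    Set (Submodule ℂ V) :=
  arrLatticeOn f Finset.univ

/-- The rank `r(A)` of the arrangement. -/
noncomputable def arrRank {ι : Type*} [Fintype ι] (f : ι → Module.Dual ℂ V) : ℕ :=
  arrRankOn f Finset.univ

/-- `X` is a modular element of the intersection lattice. -/
def IsModular {ι : Type*} [Fintype ι] (f : ι → Module.Dual ℂ V) (X : Submodule ℂ V) : Prop :=
  X ∈ arrLattice f ∧ ∀ Y ∈ arrLattice f, X ⊔ Y ∈ arrLattice f

/-- A central arrangement is supersolvable if there is a maximal chain
`V = X_0 ⊃ X_1 ⊃ ⋯ ⊃ X_r = center` of modular elements, with `X_i` of rank `i`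
and `r = r(A)`. -/
def Supersolvable {ι : Type*} [Fintype ι] (f : ι → Module.Dual ℂ V) : Prop :=
  ∃ X : ℕ → Submodule ℂ V,
    X 0 = ⊤ ∧
    X (arrRank f) = ⨅ i, LinearMap.ker (f i) ∧
    (∀ i ≤ arrRank f, IsModular f (X i)) ∧
    (∀ i ≤ arrRank f, arrCorank (X i) = i) ∧
    (∀ i j, i ≤ j → j ≤ arrRank f → X j ≤ X i)

/-- The pair of subarrangements `B ⊊ C` is a solvable extension: closure, completion
and solvability conditions on the defining functionals. -/
def IsSolvableExtension {ι : Type*} [DecidableEq ι] (f : ι → Module.Dual ℂ V) (B C : Finset ι) : Prop :=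
  B ⊂ C ∧
  -- closure
  (∀ α ∈ B, ∀ β ∈ B, α ≠ β → ∀ a ∈ C \ B, LinearIndependent ℂ ![f α, f β, f a]) ∧
  -- completion
  (∀ a ∈ C \ B, ∀ b ∈ C \ B, a ≠ b →
    ∃ α ∈ B, f α ∈ Submodule.span ℂ {f a, f b}) ∧
  -- solvability
  (∀ a ∈ C \ B, ∀ b ∈ C \ B, ∀ c ∈ C \ B, a ≠ b → b ≠ c → a ≠ c →
    ∀ α ∈ B, ∀ β ∈ B, ∀ γ ∈ B,
      f α ∈ Submodule.span ℂ {f a, f b} →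
      f β ∈ Submodule.span ℂ {f b, f c} →
      f γ ∈ Submodule.span ℂ {f a, f c} →
      ((α = β ∧ β = γ) ∨
        Module.finrank ℂ (Submodule.span ℂ ({f α, f β, f γ} : Set (Module.Dual ℂ V))) ≤ 2))

/-- `c 1 ⊂ c 2 ⊂ ⋯ ⊂ c ℓ` is a composition series of length `ℓ` for the arrangement:
it starts with a single hyperplane, ends with the full arrangement, and each step is a
solvable extension. -/
def IsCompSeries {ι : Type*} [DecidableEq ι] [Fintype ι] (f : ι → Module.Dual ℂ V) (ℓ : ℕ)
    (c : ℕ → Finset ι) : Prop :=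
  1 ≤ ℓ ∧ (c 1).card = 1 ∧ c ℓ = Finset.univ ∧
  ∀ i, 1 ≤ i → i < ℓ → IsSolvableExtension f (c i) (c (i + 1))

/-- A central arrangement is hypersolvable if it admits a composition series. -/
def Hypersolvable {ι : Type*} [DecidableEq ι] [Fintype ι] (f : ι → Module.Dual ℂ V) : Prop :=
  ∃ (ℓ : ℕ) (c : ℕ → Finset ι), IsCompSeries f ℓ c

/-- The complement of the central arrangement in `ℂ^l` defined by the functionals `f`. -/
def arrComplement {l : ℕ} {ι : Type*} (f : ι → Module.Dual ℂ (Fin l → ℂ)) :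
    Set (Fin l → ℂ) :=
  {x | ∀ i, f i x ≠ 0}

/-! A flat `⋂_{i ∈ S} ker f_i` is handled through its annihilator, the span of the `f_i`,
`i ∈ S`; its rank is the dimension of that span, and it is modular iff its annihilator meets
every span of defining functionals in a span of defining functionals.

By completion, the rank grows by at most one at each step of a composition series, so
`ℓ = r(A)` holds exactly when every step raises the rank. The flats of such a series then form a
maximal chain, and each of them is modular by downward induction along the series, since a step
that raises the rank leaves room for only one new direction. Conversely, the hyperplanes
containing the members of a maximal modular chain form a composition series of length `r(A)`,
and a Jordan–Hölder argument shows that all composition series have the same length. -/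

open Submodule Module Finset

section ThreeVectors

variable {K W : Type*} [Field K] [AddCommGroup W] [Module K W] {u v w : W}

lemma LinearIndependent.third_notMem_span (h : LinearIndependent K ![u, v, w]) :
    w ∉ span K {u, v} := by
  simpa [Set.image_insert_eq] using h.notMem_span_image (s := {0, 1}) (x := 2) (by decide)

lemma LinearIndependent.second_notMem_span (h : LinearIndependent K ![u, v, w]) :
    v ∉ span K {u, w} := by
  simpa [Set.image_insert_eq] using h.notMem_span_image (s := {0, 2}) (x := 1) (by decide)

lemma linearIndependent_three_of_notMem_span (huv : LinearIndependent K ![u, v])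
    (hw : w ∉ span K {u, v}) : LinearIndependent K ![u, v, w] := by
  have : ![u, v, w] = Fin.snoc ![u, v] w := by ext i; fin_cases i <;> rfl
  rw [this, linearIndependent_finSnoc]
  exact ⟨huv, by simpa [Matrix.range_cons, Set.pair_comm] using hw⟩

lemma finrank_span_singleton_le_one (u : W) : finrank K (K ∙ u) ≤ 1 := by
  simpa using finrank_span_le_card (R := K) ({u} : Set W)

lemma finrank_span_triple_le (u v w : W) : finrank K (span K {u, v, w}) ≤ 3 := by
  classical
  refine (finrank_span_le_card _).trans ?_
  simpa using card_le_three

end ThreeVectors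

section Dictionary

variable {ι : Type*} (f : ι → Module.Dual ℂ V)

def dualSpan (S : Finset ι) : Submodule ℂ (Module.Dual ℂ V) :=
  span ℂ (f '' S)

def kerInf (S : Finset ι) : Submodule ℂ V :=
  S.inf fun i => LinearMap.ker (f i)

def Nonproportional : Prop :=
  ∀ i j : ι, i ≠ j → ∀ a : ℂ, f i ≠ a • f j

def IsFlat (B : Finset ι) : Prop :=
  ∀ t, f t ∈ dualSpan f B → t ∈ B

def IsModularSpan (U : Submodule ℂ (Module.Dual ℂ V)) : Prop :=
  ∀ S : Finset ι, ∃ T : Finset ι, U ⊓ dualSpan f S = dualSpan f T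

variable {f}

lemma mem_dualSpan {S : Finset ι} {i : ι} (hi : i ∈ S) : f i ∈ dualSpan f S :=
  subset_span ⟨i, hi, rfl⟩

lemma dualSpan_mono {S T : Finset ι} (h : S ⊆ T) : dualSpan f S ≤ dualSpan f T :=
  span_mono (Set.image_mono (coe_subset.2 h))

lemma dualSpan_le {S : Finset ι} {U : Submodule ℂ (Module.Dual ℂ V)}
    (h : ∀ i ∈ S, f i ∈ U) : dualSpan f S ≤ U :=
  span_le.2 <| Set.image_subset_iff.2 h

lemma dualSpan_empty : dualSpan f ∅ = ⊥ := by
  simp [dualSpan]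

lemma dualSpan_singleton (a : ι) : dualSpan f {a} = ℂ ∙ f a := by
  simp [dualSpan]

lemma dualSpan_pair [DecidableEq ι] (a b : ι) : dualSpan f {a, b} = span ℂ {f a, f b} := by
  simp [dualSpan, Set.image_insert_eq]

lemma dualSpan_triple [DecidableEq ι] (a b c : ι) :
    dualSpan f {a, b, c} = span ℂ {f a, f b, f c} := by
  simp [dualSpan, Set.image_insert_eq]

lemma span_pair_le_dualSpan {S : Finset ι} {a b : ι} (ha : a ∈ S) (hb : b ∈ S) :
    span ℂ {f a, f b} ≤ dualSpan f S := by
  rw [span_le, Set.insert_subset_iff, Set.singleton_subset_iff]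
  exact ⟨mem_dualSpan ha, mem_dualSpan hb⟩

lemma isFlat_filter_mem [Fintype ι] (U : Submodule ℂ (Module.Dual ℂ V))
    [DecidablePred fun t => f t ∈ U] : IsFlat f {t | f t ∈ U} := fun t ht =>
  mem_filter.2 ⟨mem_univ t, dualSpan_le (fun _ hs => (mem_filter.1 hs).2) ht⟩

lemma kerInf_eq_dualCoannihilator (S : Finset ι) :
    kerInf f S = (dualSpan f S).dualCoannihilator := by
  ext v
  rw [← SetLike.mem_coe (x := v) (p := (dualSpan f S).dualCoannihilator), dualSpan,
    coe_dualCoannihilator_span]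
  simp [kerInf]

lemma kerInf_univ [Fintype ι] : kerInf f univ = ⨅ i, LinearMap.ker (f i) :=
  inf_univ_eq_iInf _

lemma kerInf_mem_arrLattice [Fintype ι] (S : Finset ι) : kerInf f S ∈ arrLattice f :=
  ⟨S, subset_univ S, rfl⟩

variable [FiniteDimensional ℂ V]

lemma arrCorank_eq_finrank (X : Submodule ℂ V) : arrCorank X = finrank ℂ X.dualAnnihilator :=
  (Subspace.quotEquivAnnihilator X).finrank_eq

lemma dualAnnihilator_kerInf (S : Finset ι) : (kerInf f S).dualAnnihilator = dualSpan f S := by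
  rw [kerInf_eq_dualCoannihilator, Subspace.dualCoannihilator_dualAnnihilator_eq]

lemma arrCorank_kerInf (S : Finset ι) : arrCorank (kerInf f S) = finrank ℂ (dualSpan f S) := by
  rw [arrCorank_eq_finrank, dualAnnihilator_kerInf]

variable [Fintype ι] {X : Submodule ℂ V}

lemma mem_arrLattice_iff : X ∈ arrLattice f ↔ ∃ S, X.dualAnnihilator = dualSpan f S := by
  constructor
  · rintro ⟨S, -, rfl⟩
    exact ⟨S, dualAnnihilator_kerInf S⟩
  · rintro ⟨S, hS⟩
    exact ⟨S, subset_univ S,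
      Subspace.dualAnnihilator_inj.1 (hS.trans (dualAnnihilator_kerInf S).symm)⟩

lemma isModular_iff (hX : X ∈ arrLattice f) :
    IsModular f X ↔ IsModularSpan f X.dualAnnihilator := by
  refine ⟨fun h S => ?_, fun h => ⟨hX, fun Y hY => ?_⟩⟩
  · obtain ⟨T, hT⟩ := mem_arrLattice_iff.1 (h.2 _ (kerInf_mem_arrLattice S))
    exact ⟨T, by rw [← hT, dualAnnihilator_sup_eq, dualAnnihilator_kerInf]⟩
  · obtain ⟨S, hS⟩ := mem_arrLattice_iff.1 hY
    obtain ⟨T, hT⟩ := h S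
    exact mem_arrLattice_iff.2 ⟨T, by rw [dualAnnihilator_sup_eq, hS, hT]⟩

lemma arrRank_eq_finrank : arrRank f = finrank ℂ (dualSpan f univ) := by
  refine IsGreatest.csSup_eq
    ⟨⟨kerInf f univ, kerInf_mem_arrLattice _, arrCorank_kerInf _⟩, ?_⟩
  rintro _ ⟨X, hX, rfl⟩
  obtain ⟨S, hS⟩ := mem_arrLattice_iff.1 hX
  rw [arrCorank_eq_finrank, hS]
  exact finrank_mono (dualSpan_mono (subset_univ S))

lemma dualSpan_filter_mem_dualAnnihilator (hX : X ∈ arrLattice f)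
    [DecidablePred fun t => f t ∈ X.dualAnnihilator] :
    dualSpan f {t | f t ∈ X.dualAnnihilator} = X.dualAnnihilator := by
  obtain ⟨S, hS⟩ := mem_arrLattice_iff.1 hX
  exact le_antisymm (dualSpan_le fun t ht => (mem_filter.1 ht).2) <|
    hS.trans_le <| dualSpan_mono fun s hs => mem_filter.2 ⟨mem_univ s, hS ▸ mem_dualSpan hs⟩

end Dictionary

section CompositionSeries

variable {ι : Type*} [DecidableEq ι] {f : ι → Module.Dual ℂ V} {B B' C E : Finset ι}

namespace IsSolvableExtension

lemma not_ssubset (h : IsSolvableExtension f B E) (h' : IsSolvableExtension f B' E) :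
    ¬ B ⊂ B' := by
  intro hBB'
  obtain ⟨-, -, hcompletion, -⟩ := h
  obtain ⟨hB'E, hclosure', -, -⟩ := h'
  obtain ⟨a, haB', haB⟩ := exists_of_ssubset hBB'
  obtain ⟨b, hbE, hbB'⟩ := exists_of_ssubset hB'E
  obtain ⟨w, hwB, hw⟩ := hcompletion a (mem_sdiff.2 ⟨hB'E.subset haB', haB⟩)
    b (mem_sdiff.2 ⟨hbE, fun hb => hbB' (hBB'.subset hb)⟩) (by rintro rfl; exact hbB' haB')
  have hwa : a ≠ w := by rintro rfl; exact haB hwB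
  have hb : b ∈ E \ B' := mem_sdiff.2 ⟨hbE, hbB'⟩
  exact (hclosure' a haB' w (hBB'.subset hwB) hwa b hb).second_notMem_span hw

lemma card_le_one_of_disjoint (h : IsSolvableExtension f B E) (h' : IsSolvableExtension f B' E)
    (hdisj : Disjoint B B') : #B ≤ 1 := by
  by_contra! hcard
  obtain ⟨a, ha, b, hb, hab⟩ := one_lt_card.1 hcard
  have hnew : ∀ x ∈ B, x ∈ E \ B' := fun x hx =>
    mem_sdiff.2 ⟨h.1.subset hx, disjoint_left.1 hdisj hx⟩
  obtain ⟨w, hwB', hw⟩ := h'.2.2.1 a (hnew a ha) b (hnew b hb) hab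
  have hwE : w ∈ E \ B := mem_sdiff.2 ⟨h'.1.subset hwB', disjoint_right.1 hdisj hwB'⟩
  exact (h.2.1 a ha b hb hab w hwE).third_notMem_span hw

lemma inter_left (h : IsSolvableExtension f B E) (h' : IsSolvableExtension f B' E)
    (hne : B ≠ B') : IsSolvableExtension f (B ∩ B') B := by
  have hdiff : B \ (B ∩ B') = B \ B' := sdiff_inter_self_left B B'
  have hnew : ∀ x ∈ B \ (B ∩ B'), x ∈ E \ B' := fun x hx => by
    rw [hdiff, mem_sdiff] at hx
    exact mem_sdiff.2 ⟨h.1.subset hx.1, hx.2⟩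
  refine ⟨(ssubset_iff_of_subset inter_subset_left).2 ?_, ?_, ?_, ?_⟩
  · obtain ⟨x, hxB, hxB'⟩ := not_subset.1 fun hBB' => h.not_ssubset h' (hBB'.ssubset_of_ne hne)
    exact ⟨x, hxB, fun hx => hxB' (mem_inter.1 hx).2⟩
  · intro α hα β hβ hαβ a ha
    exact h'.2.1 α (mem_inter.1 hα).2 β (mem_inter.1 hβ).2 hαβ a (hnew a ha)
  · intro a ha b hb hab
    obtain ⟨w, hwB', hw⟩ := h'.2.2.1 a (hnew a ha) b (hnew b hb) hab
    refine ⟨w, mem_inter.2 ⟨?_, hwB'⟩, hw⟩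
    by_contra hwB
    have hB : ∀ x ∈ B \ (B ∩ B'), x ∈ B := fun x hx => (mem_sdiff.1 hx).1
    have hwE : w ∈ E \ B := mem_sdiff.2 ⟨h'.1.subset hwB', hwB⟩
    exact (h.2.1 a (hB a ha) b (hB b hb) hab w hwE).third_notMem_span hw
  · intro a ha b hb c hc hab hbc hac α hα β hβ γ hγ
    exact h'.2.2.2 a (hnew a ha) b (hnew b hb) c (hnew c hc) hab hbc hac
      α (mem_inter.1 hα).2 β (mem_inter.1 hβ).2 γ (mem_inter.1 hγ).2

end IsSolvableExtension

structure IsCompSeriesOn (f : ι → Module.Dual ℂ V) (E : Finset ι) (ℓ : ℕ)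
    (c : ℕ → Finset ι) : Prop where
  one_le : 1 ≤ ℓ
  card_one : #(c 1) = 1
  last : c ℓ = E
  step : ∀ i, 1 ≤ i → i < ℓ → IsSolvableExtension f (c i) (c (i + 1))

lemma IsCompSeries.isCompSeriesOn [Fintype ι] {ℓ : ℕ} {c : ℕ → Finset ι}
    (hc : IsCompSeries f ℓ c) : IsCompSeriesOn f univ ℓ c :=
  ⟨hc.1, hc.2.1, hc.2.2.1, hc.2.2.2⟩

lemma isCompSeriesOn_const (hB : #B = 1) : IsCompSeriesOn f B 1 fun _ => B :=
  ⟨le_rfl, hB, rfl, fun _ _ _ => by omega⟩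

namespace IsCompSeriesOn

variable {ℓ ℓ' : ℕ} {c c' : ℕ → Finset ι}

lemma subset (hs : IsCompSeriesOn f E ℓ c) {i j : ℕ} (hi : 1 ≤ i) (hij : i ≤ j)
    (hj : j ≤ ℓ) : c i ⊆ c j := by
  induction j, hij using Nat.le_induction with
  | base => exact subset_rfl
  | succ j hij ih => exact (ih (by omega)).trans (hs.step j (by omega) (by omega)).1.subset

lemma nonempty (hs : IsCompSeriesOn f E ℓ c) : E.Nonempty := by
  rw [← hs.last]
  exact (card_pos.1 (by rw [hs.card_one]; exact one_pos)).mono (hs.subset le_rfl hs.one_le le_rfl)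

lemma truncate (hs : IsCompSeriesOn f E ℓ c) (hℓ : 2 ≤ ℓ) :
    IsCompSeriesOn f (c (ℓ - 1)) (ℓ - 1) c :=
  ⟨by omega, hs.card_one, rfl, fun i hi hiℓ => hs.step i hi (by omega)⟩

lemma last_step (hs : IsCompSeriesOn f E ℓ c) (hℓ : 2 ≤ ℓ) :
    IsSolvableExtension f (c (ℓ - 1)) E := by
  have := hs.step (ℓ - 1) (by omega) (by omega)
  rwa [Nat.sub_add_cancel (by omega), hs.last] at this

lemma snoc (hs : IsCompSeriesOn f B ℓ c) (h : IsSolvableExtension f B C) :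
    IsCompSeriesOn f C (ℓ + 1) (Function.update c (ℓ + 1) C) := by
  have hc : ∀ i ≤ ℓ, Function.update c (ℓ + 1) C i = c i := fun i hi =>
    Function.update_of_ne (by omega) _ _
  refine ⟨by omega, by rw [hc 1 hs.one_le]; exact hs.card_one, by simp, fun i hi hiℓ => ?_⟩
  rw [hc i (by omega)]
  rcases (Nat.lt_succ_iff.1 hiℓ).lt_or_eq with hiℓ | rfl
  · rw [hc (i + 1) hiℓ]
    exact hs.step i hi hiℓ
  · rw [Function.update_self, hs.last]
    exact h

lemma length_eq_one_of_card_le_one (hs : IsCompSeriesOn f E ℓ c) (hE : #E ≤ 1) : ℓ = 1 := by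
  by_contra hℓ
  have h1 := card_le_card (hs.subset le_rfl (by have := hs.one_le; omega) (by omega) :
    c 1 ⊆ c (ℓ - 1))
  have h2 := card_lt_card (hs.last_step (by have := hs.one_le; omega)).1
  have := hs.card_one
  omega

lemma two_le_length (hs : IsCompSeriesOn f E ℓ c) (hB : IsSolvableExtension f B E)
    (hBne : B.Nonempty) : 2 ≤ ℓ := by
  by_contra hℓ
  have hE : #E = 1 := by rw [← hs.last, show ℓ = 1 by have := hs.one_le; omega, hs.card_one]
  have := card_lt_card hB.1
  have := hBne.card_pos
  omega

/-- Compare `B` with the penultimate term `P` of the series: either `B = P`, or `B ∩ P` is a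
solvable extension of both, or `B` and `P` are disjoint singletons. -/
theorem exists_of_isSolvableExtension (hs : IsCompSeriesOn f E ℓ c)
    (hB : IsSolvableExtension f B E) (hBne : B.Nonempty) :
    ∃ d, IsCompSeriesOn f B (ℓ - 1) d := by
  induction E using Finset.strongInduction generalizing ℓ c B with
  | H E ih =>
  have hℓ := hs.two_le_length hB hBne
  have hP := hs.last_step hℓ
  have hsP := hs.truncate hℓ
  by_cases hBP : B = c (ℓ - 1)
  · exact ⟨c, hBP ▸ hsP⟩
  by_cases hD : (B ∩ c (ℓ - 1)).Nonempty
  · obtain ⟨d, hd⟩ := ih _ hP.1 hsP (hP.inter_left hB (Ne.symm hBP)) (inter_comm B _ ▸ hD)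
    have := (inter_comm B _ ▸ hd).snoc (hB.inter_left hP hBP)
    rw [show ℓ - 1 - 1 + 1 = ℓ - 1 by omega] at this
    exact ⟨_, this⟩
  · rw [not_nonempty_iff_eq_empty, ← disjoint_iff_inter_eq_empty] at hD
    have hB1 : #B = 1 := le_antisymm (hB.card_le_one_of_disjoint hP hD) hBne.card_pos
    rw [hsP.length_eq_one_of_card_le_one (hP.card_le_one_of_disjoint hB hD.symm)]
    exact ⟨_, isCompSeriesOn_const hB1⟩

theorem length_eq (hs : IsCompSeriesOn f E ℓ c) (hs' : IsCompSeriesOn f E ℓ' c') :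
    ℓ = ℓ' := by
  induction E using Finset.strongInduction generalizing ℓ ℓ' c c' with
  | H E ih =>
  rcases hs.one_le.eq_or_lt with rfl | hℓ
  · rw [hs'.length_eq_one_of_card_le_one (by rw [← hs.last, hs.card_one])]
  have hP := hs.last_step hℓ
  obtain ⟨d, hd⟩ := hs'.exists_of_isSolvableExtension hP (hs.truncate hℓ).nonempty
  have := ih _ hP.1 (hs.truncate hℓ) hd
  have := hs'.one_le
  omega

end IsCompSeriesOn

end CompositionSeries

section Rank

variable {ι : Type*} [DecidableEq ι] {f : ι → Module.Dual ℂ V} {B C T : Finset ι}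

namespace IsSolvableExtension

lemma exists_mem_span_pair (hprop : Nonproportional f)
    (h : IsSolvableExtension f B C) {a b : ι} (ha : a ∈ C \ B) (hb : b ∈ C \ B)
    (hab : a ≠ b) : ∃ w ∈ B, f w ∈ span ℂ {f a, f b} ∧ f b ∈ span ℂ {f w, f a} := by
  obtain ⟨w, hwB, hw⟩ := h.2.2.1 a ha b hb hab
  -- `f w ∉ ℂ ∙ f a` by non-proportionality, so `f b` can be exchanged for `f w`
  refine ⟨w, hwB, hw, mem_span_insert_exchange (by rwa [Set.pair_comm]) ?_⟩
  rintro hwa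
  obtain ⟨x, hx⟩ := mem_span_singleton.1 hwa
  exact hprop w a (by rintro rfl; exact (mem_sdiff.1 ha).2 hwB) x hx.symm

lemma dualSpan_le_sup (hprop : Nonproportional f)
    (h : IsSolvableExtension f B C) {a : ι} (ha : a ∈ C \ B) :
    dualSpan f C ≤ dualSpan f B ⊔ ℂ ∙ f a := by
  refine dualSpan_le fun b hb => ?_
  by_cases hbB : b ∈ B
  · exact mem_sup_left (mem_dualSpan hbB)
  rcases eq_or_ne a b with rfl | hab
  · exact mem_sup_right (mem_span_singleton_self _)
  obtain ⟨w, hwB, -, hbw⟩ := h.exists_mem_span_pair hprop ha (mem_sdiff.2 ⟨hb, hbB⟩) hab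
  rw [span_insert] at hbw
  exact sup_le_sup_right (span_singleton_le_iff_mem _ _ |>.2 (mem_dualSpan hwB)) _ hbw

variable [FiniteDimensional ℂ V]

lemma finrank_dualSpan_le (hprop : Nonproportional f) (h : IsSolvableExtension f B C) :
    finrank ℂ (dualSpan f C) ≤ finrank ℂ (dualSpan f B) + 1 := by
  obtain ⟨a, haC, haB⟩ := exists_of_ssubset h.1
  calc finrank ℂ (dualSpan f C)
      ≤ finrank ℂ ↥(dualSpan f B ⊔ ℂ ∙ f a) :=
        finrank_mono (h.dualSpan_le_sup hprop (mem_sdiff.2 ⟨haC, haB⟩))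
    _ ≤ finrank ℂ (dualSpan f B) + finrank ℂ (ℂ ∙ f a) :=
        finrank_add_le_finrank_add_finrank _ _
    _ ≤ finrank ℂ (dualSpan f B) + 1 := by grw [finrank_span_singleton_le_one]

lemma notMem_dualSpan (hprop : Nonproportional f) (h : IsSolvableExtension f B C)
    (hrank : finrank ℂ (dualSpan f B) < finrank ℂ (dualSpan f C)) {a : ι} (ha : a ∈ C \ B) :
    f a ∉ dualSpan f B := by
  intro hfa
  have := finrank_mono <| (h.dualSpan_le_sup hprop ha).trans
    (sup_le le_rfl ((span_singleton_le_iff_mem _ _).2 hfa))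
  omega

end IsSolvableExtension

namespace IsCompSeriesOn

variable [FiniteDimensional ℂ V] {E : Finset ι} {ℓ : ℕ} {c : ℕ → Finset ι}

lemma finrank_le_add (hprop : Nonproportional f)
    (hs : IsCompSeriesOn f E ℓ c) {j k : ℕ} (hj : 1 ≤ j) (hjk : j ≤ k) (hk : k ≤ ℓ) :
    finrank ℂ (dualSpan f (c k)) ≤ finrank ℂ (dualSpan f (c j)) + (k - j) := by
  induction k, hjk using Nat.le_induction with
  | base => simp
  | succ k hjk ih =>
    have := (hs.step k (by omega) (by omega)).finrank_dualSpan_le hprop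
    have := ih (by omega)
    omega

lemma finrank_eq (hprop : Nonproportional f)
    (hs : IsCompSeriesOn f E ℓ c) (hℓ : ℓ ≤ finrank ℂ (dualSpan f E)) {j : ℕ}
    (hj : 1 ≤ j) (hjℓ : j ≤ ℓ) : finrank ℂ (dualSpan f (c j)) = j := by
  have h1 : finrank ℂ (dualSpan f (c 1)) ≤ 1 := by
    obtain ⟨t, ht⟩ := card_eq_one.1 hs.card_one
    rw [ht, dualSpan_singleton]
    exact finrank_span_singleton_le_one _
  have := hs.finrank_le_add hprop le_rfl hj hjℓ
  have := hs.finrank_le_add hprop hj hjℓ le_rfl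
  rw [hs.last] at this
  omega

variable [Fintype ι]

lemma isFlat (hprop : Nonproportional f)
    (hs : IsCompSeriesOn f univ ℓ c) (hℓ : ℓ ≤ finrank ℂ (dualSpan f univ)) {j : ℕ}
    (hj : 1 ≤ j) (hjℓ : j ≤ ℓ) : IsFlat f (c j) := by
  intro t ht
  suffices ∀ k, j ≤ k → k ≤ ℓ → t ∈ c k → t ∈ c j from
    this ℓ hjℓ le_rfl (hs.last ▸ mem_univ t)
  intro k hjk
  induction k, hjk using Nat.le_induction with
  | base => exact fun _ h => h
  | succ k hjk ih =>
    intro hk htk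
    by_contra htj
    have htk' : t ∉ c k := fun h => htj (ih (by omega) h)
    refine (hs.step k (by omega) hk).notMem_dualSpan hprop ?_ (mem_sdiff.2 ⟨htk, htk'⟩)
      (dualSpan_mono (hs.subset hj hjk (by omega)) ht)
    rw [hs.finrank_eq hprop hℓ (by omega) hk, hs.finrank_eq hprop hℓ (by omega) (by omega)]
    omega

end IsCompSeriesOn

end Rank

section Modularity

variable {ι : Type*} [DecidableEq ι] {f : ι → Module.Dual ℂ V} {B C T : Finset ι}

namespace IsSolvableExtension

open Classical in
/-- By completion, every functional of `T` outside `B` is a combination of one fixed such `f a`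
and of functionals of `B` lying in `dualSpan f T`; as `f a ∉ dualSpan f B`, the modular law of
the subspace lattice finishes. -/
lemma inf_dualSpan_eq (hprop : Nonproportional f)
    (h : IsSolvableExtension f B C) (hB : IsFlat f B) (hT : T ⊆ C) :
    dualSpan f B ⊓ dualSpan f T = dualSpan f {t ∈ B | f t ∈ dualSpan f T} := by
  set T' := {t ∈ B | f t ∈ dualSpan f T}
  have hT'B : dualSpan f T' ≤ dualSpan f B := dualSpan_mono (filter_subset _ _)
  refine le_antisymm ?_ (le_inf hT'B (dualSpan_le fun t ht => (mem_filter.1 ht).2))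
  by_cases hTB : T ⊆ B
  · exact inf_le_right.trans (dualSpan_mono fun t ht => mem_filter.2 ⟨hTB ht, mem_dualSpan ht⟩)
  obtain ⟨a, haT, haB⟩ := not_subset.1 hTB
  have ha : a ∈ C \ B := mem_sdiff.2 ⟨hT haT, haB⟩
  have hTa : dualSpan f T ≤ dualSpan f T' ⊔ ℂ ∙ f a := dualSpan_le fun b hb => by
    by_cases hbB : b ∈ B
    · exact mem_sup_left (mem_dualSpan (mem_filter.2 ⟨hbB, mem_dualSpan hb⟩))
    rcases eq_or_ne a b with rfl | hab
    · exact mem_sup_right (mem_span_singleton_self _)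
    obtain ⟨w, hwB, hw, hbw⟩ :=
      h.exists_mem_span_pair hprop ha (mem_sdiff.2 ⟨hT hb, hbB⟩) hab
    have hwT' : w ∈ T' := mem_filter.2 ⟨hwB, span_pair_le_dualSpan haT hb hw⟩
    rw [span_insert] at hbw
    exact sup_le_sup_right ((span_singleton_le_iff_mem _ _).2 (mem_dualSpan hwT')) _ hbw
  have hdisj : dualSpan f B ⊓ ℂ ∙ f a = ⊥ :=
    disjoint_iff.1 (disjoint_span_singleton.2 fun hfa => absurd (hB a hfa) haB)
  calc dualSpan f B ⊓ dualSpan f T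
      ≤ dualSpan f B ⊓ (dualSpan f T' ⊔ ℂ ∙ f a) := inf_le_inf_left _ hTa
    _ = dualSpan f T' := by rw [inf_comm, sup_inf_assoc_of_le _ hT'B, inf_comm, hdisj, sup_bot_eq]

lemma isModularSpan (hprop : Nonproportional f)
    (h : IsSolvableExtension f B C) (hB : IsFlat f B) (hC : IsFlat f C)
    (hmod : IsModularSpan f (dualSpan f C)) : IsModularSpan f (dualSpan f B) := by
  intro S
  obtain ⟨T, hT⟩ := hmod S
  have hTC : T ⊆ C := fun t ht =>
    hC t (hT.symm ▸ mem_dualSpan ht : f t ∈ dualSpan f C ⊓ dualSpan f S).1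
  have hST : dualSpan f B ⊓ dualSpan f S = dualSpan f B ⊓ dualSpan f T := by
    rw [← hT, ← inf_assoc, inf_eq_left.2 (dualSpan_mono h.1.subset)]
  exact ⟨_, hST.trans (h.inf_dualSpan_eq hprop hB hTC)⟩

end IsSolvableExtension

variable [FiniteDimensional ℂ V] [Fintype ι] {ℓ : ℕ} {c : ℕ → Finset ι}

lemma IsCompSeriesOn.isModularSpan (hprop : Nonproportional f)
    (hs : IsCompSeriesOn f univ ℓ c) (hℓ : ℓ ≤ finrank ℂ (dualSpan f univ)) {j : ℕ}
    (hj : 1 ≤ j) (hjℓ : j ≤ ℓ) : IsModularSpan f (dualSpan f (c j)) := by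
  induction hjℓ using Nat.decreasingInduction with
  | self => exact fun S => ⟨S, by rw [hs.last, inf_eq_right.2 (dualSpan_mono (subset_univ S))]⟩
  | of_succ k hk ih =>
    exact (hs.step k hj hk).isModularSpan hprop (hs.isFlat hprop hℓ hj hk.le)
      (hs.isFlat hprop hℓ (by omega) hk) (ih (by omega))

theorem supersolvable_of_isCompSeries (hprop : Nonproportional f)
    (hc : IsCompSeries f ℓ c) (hℓ : ℓ = arrRank f) : Supersolvable f := by
  have hs := hc.isCompSeriesOn
  subst hℓ
  have hr : arrRank f ≤ finrank ℂ (dualSpan f univ) := arrRank_eq_finrank.le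
  refine ⟨fun j => if j = 0 then ⊤ else kerInf f (c j), by simp, ?_, fun j hj => ?_,
    fun j hj => ?_, fun i j hij hj => ?_⟩
  · simp [Nat.one_le_iff_ne_zero.1 hs.one_le, hs.last, kerInf_univ]
  · dsimp only
    split_ifs with hj0
    · refine ⟨kerInf_mem_arrLattice ∅, fun Y _ => ?_⟩
      rw [top_sup_eq]
      exact kerInf_mem_arrLattice ∅
    · rw [isModular_iff (kerInf_mem_arrLattice _), dualAnnihilator_kerInf]
      exact hs.isModularSpan hprop hr (by omega) hj
  · dsimp only
    split_ifs with hj0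
    · rw [hj0, arrCorank_eq_finrank, dualAnnihilator_top, finrank_bot]
    · rw [arrCorank_kerInf, hs.finrank_eq hprop hr (by omega) hj]
  · dsimp only
    split_ifs with hj0 hi0 hi0
    · exact le_rfl
    · omega
    · exact le_top
    · exact inf_mono (hs.subset (by omega) hij hj)

end Modularity

section Supersolvable

variable {ι : Type*} {f : ι → Module.Dual ℂ V} {B C : Finset ι}

lemma linearIndependent_pair (hf0 : ∀ i, f i ≠ 0)
    (hprop : Nonproportional f) {a b : ι} (hab : a ≠ b) :
    LinearIndependent ℂ ![f a, f b] :=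
  (LinearIndependent.pair_iff' (hf0 a)).2 fun x hx => hprop b a hab.symm x hx.symm

lemma finrank_span_pair (hf0 : ∀ i, f i ≠ 0)
    (hprop : Nonproportional f) {a b : ι} (hab : a ≠ b) :
    finrank ℂ (span ℂ {f a, f b}) = 2 := by
  rw [← Matrix.range_cons_cons_empty _ _ ![]]
  exact finrank_span_eq_card (linearIndependent_pair hf0 hprop hab)

variable [FiniteDimensional ℂ V]

lemma card_eq_one_of_finrank_dualSpan_eq_one (hf0 : ∀ i, f i ≠ 0)
    (hprop : Nonproportional f) (h : finrank ℂ (dualSpan f B) = 1) :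
    #B = 1 := by
  obtain ⟨a, ha⟩ : B.Nonempty := by
    rw [nonempty_iff_ne_empty]
    rintro rfl
    rw [dualSpan_empty, finrank_bot] at h
    exact zero_ne_one h
  refine card_eq_one.2 ⟨a, eq_singleton_iff_unique_mem.2 ⟨ha, fun b hb => ?_⟩⟩
  by_contra hba
  have := finrank_mono (span_pair_le_dualSpan (f := f) hb ha)
  rw [finrank_span_pair hf0 hprop hba, h] at this
  omega

lemma one_le_arrRank [Fintype ι] [Nonempty ι] (hf0 : ∀ i, f i ≠ 0) : 1 ≤ arrRank f := by
  obtain ⟨t⟩ := ‹Nonempty ι›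
  rw [arrRank_eq_finrank, Nat.one_le_iff_ne_zero, Ne, finrank_eq_zero]
  exact fun h => hf0 t (by simpa [h] using mem_dualSpan (f := f) (mem_univ t))

lemma IsModularSpan.exists_mem_span_pair [DecidableEq ι]
    (hmod : IsModularSpan f (dualSpan f B)) (hf0 : ∀ i, f i ≠ 0) (hprop : Nonproportional f)
    (hB : IsFlat f B) (hBC : B ⊆ C)
    (hrank : finrank ℂ (dualSpan f C) ≤ finrank ℂ (dualSpan f B) + 1) {a b : ι} (ha : a ∈ C)
    (hb : b ∈ C) (hab : a ≠ b) : ∃ t ∈ B, f t ∈ span ℂ {f a, f b} := by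
  obtain ⟨T, hT⟩ := hmod {a, b}
  have hab2 : finrank ℂ (dualSpan f {a, b}) = 2 := by
    rw [dualSpan_pair]
    exact finrank_span_pair hf0 hprop hab
  have hsup : dualSpan f B ⊔ dualSpan f {a, b} ≤ dualSpan f C :=
    sup_le (dualSpan_mono hBC) (dualSpan_mono (insert_subset ha (singleton_subset_iff.2 hb)))
  have hT0 : 0 < finrank ℂ (dualSpan f T) := by
    have := finrank_sup_add_finrank_inf_eq (dualSpan f B) (dualSpan f {a, b})
    have := finrank_mono hsup
    rw [← hT]
    omega
  obtain ⟨t, ht⟩ : T.Nonempty := by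
    rw [nonempty_iff_ne_empty]
    rintro rfl
    rw [dualSpan_empty, finrank_bot] at hT0
    exact lt_irrefl 0 hT0
  have hft : f t ∈ dualSpan f B ⊓ dualSpan f {a, b} := hT ▸ mem_dualSpan ht
  exact ⟨t, hB t hft.1, (dualSpan_pair a b).le hft.2⟩

theorem isSolvableExtension_of_isModularSpan [DecidableEq ι] (hf0 : ∀ i, f i ≠ 0)
    (hprop : Nonproportional f) (hB : IsFlat f B) (hBC : B ⊆ C)
    (hrank : finrank ℂ (dualSpan f C) = finrank ℂ (dualSpan f B) + 1)
    (hmod : IsModularSpan f (dualSpan f B)) : IsSolvableExtension f B C := by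
  have hnew : ∀ a ∈ C \ B, f a ∉ dualSpan f B := fun a ha hfa => (mem_sdiff.1 ha).2 (hB a hfa)
  refine ⟨hBC.ssubset_of_ne (by rintro rfl; omega), ?_, ?_, ?_⟩
  · intro α hα β hβ hαβ a ha
    exact linearIndependent_three_of_notMem_span (linearIndependent_pair hf0 hprop hαβ)
      fun hfa => hnew a ha (span_pair_le_dualSpan hα hβ hfa)
  · intro a ha b hb hab
    exact hmod.exists_mem_span_pair hf0 hprop hB hBC hrank.le (mem_sdiff.1 ha).1
      (mem_sdiff.1 hb).1 hab
  · intro a ha b _ c _ _ _ _ α hα β hβ γ hγ hfα hfβ hfγ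
    right
    have hαβγ : span ℂ {f α, f β, f γ} ≤ dualSpan f B ⊓ dualSpan f {a, b, c} := by
      rw [span_le, Set.insert_subset_iff, Set.insert_subset_iff, Set.singleton_subset_iff]
      exact ⟨⟨mem_dualSpan hα, span_pair_le_dualSpan (by simp) (by simp) hfα⟩,
        ⟨mem_dualSpan hβ, span_pair_le_dualSpan (by simp) (by simp) hfβ⟩,
        ⟨mem_dualSpan hγ, span_pair_le_dualSpan (by simp) (by simp) hfγ⟩⟩
    have hlt : dualSpan f B ⊓ dualSpan f {a, b, c} < dualSpan f {a, b, c} :=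
      inf_lt_right.2 fun hle => hnew a ha (hle (mem_dualSpan (by simp)))
    have := finrank_lt_finrank_of_lt hlt
    have := finrank_mono hαβγ
    have := finrank_span_triple_le (K := ℂ) (f a) (f b) (f c)
    rw [← dualSpan_triple] at this
    omega

variable [Fintype ι] [DecidableEq ι]

theorem exists_isCompSeriesOn_of_supersolvable [Nonempty ι] (hf0 : ∀ i, f i ≠ 0)
    (hprop : Nonproportional f) (h : Supersolvable f) :
    ∃ c, IsCompSeriesOn f univ (arrRank f) c := by
  classical
  obtain ⟨X, -, hXr, hmod, hcorank, hanti⟩ := h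
  set c : ℕ → Finset ι := fun i => {t | f t ∈ (X i).dualAnnihilator}
  have hspan : ∀ i ≤ arrRank f, dualSpan f (c i) = (X i).dualAnnihilator := fun i hi =>
    dualSpan_filter_mem_dualAnnihilator (hmod i hi).1
  have hrank : ∀ i ≤ arrRank f, finrank ℂ (dualSpan f (c i)) = i := fun i hi => by
    rw [hspan i hi, ← arrCorank_eq_finrank, hcorank i hi]
  have hr := one_le_arrRank (f := f) hf0
  refine ⟨c, hr, card_eq_one_of_finrank_dualSpan_eq_one hf0 hprop (hrank 1 hr), ?_,
    fun i hi hir => ?_⟩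
  · refine eq_univ_of_forall fun t => mem_filter.2 ⟨mem_univ t, (mem_dualAnnihilator _).2 ?_⟩
    intro v hv
    rw [hXr, mem_iInf] at hv
    exact hv t
  · have hsub : c i ⊆ c (i + 1) := fun t ht => mem_filter.2
      ⟨mem_univ t, dualAnnihilator_anti (hanti i (i + 1) (by omega) hir) (mem_filter.1 ht).2⟩
    refine isSolvableExtension_of_isModularSpan hf0 hprop (isFlat_filter_mem _) hsub
      (by rw [hrank i hir.le, hrank (i + 1) hir]) ?_
    rw [hspan i hir.le]
    exact (isModular_iff (hmod i hir.le).1).1 (hmod i hir.le)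

end Supersolvable

/-- Jambu–Papadima, Theorem D. A hypersolvable central arrangement with a
composition series of length `ℓ` is supersolvable if and only if `ℓ = r(A)`. -/
theorem supersolvable_iff_length_eq_rank (l n ℓ : ℕ)
    (f : Fin n → Module.Dual ℂ (Fin l → ℂ))
    (hf0 : ∀ i, f i ≠ 0)
    (hprop : ∀ i j : Fin n, i ≠ j → ∀ a : ℂ, f i ≠ a • f j)
    (c : ℕ → Finset (Fin n)) (hc : IsCompSeries f ℓ c) :
    Supersolvable f ↔ ℓ = arrRank f := by
  constructor
  · intro h
    have hs := hc.isCompSeriesOn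
    have : Nonempty (Fin n) := univ_nonempty_iff.1 hs.nonempty
    obtain ⟨c', hc'⟩ := exists_isCompSeriesOn_of_supersolvable hf0 hprop h
    exact hs.length_eq hc'
  · exact supersolvable_of_isCompSeries hprop hc
end

section
/- Any two composition series of a hypersolvable central arrangement A in ℂ^l have the same length; that is, the length ℓ(A) of A is well defined. -/
/-! Common notions for central hyperplane arrangements, given by a family
`f : ι → Module.Dual ℂ V` of defining linear functionals (one per hyperplane). -/

variable {V : Type*} [AddCommGroup V] [Module ℂ V]

section JPproof

open Submodule

variable {l n : ℕ}

def JPGen (f : Fin n → Module.Dual ℂ (Fin l → ℂ)) (B : Finset (Fin n)) : Set (Fin n → ℂ) :=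
  {v | (∑ i, v i • f i) = 0 ∧ (∀ i, v i ≠ 0 → i ∈ B) ∧
    ∃ x y z : Fin n, ∀ i, v i ≠ 0 → i = x ∨ i = y ∨ i = z}

variable (f : Fin n → Module.Dual ℂ (Fin l → ℂ))

lemma JPsum_subset {v : Fin n → ℂ} {S : Finset (Fin n)} (h : ∀ i, v i ≠ 0 → i ∈ S) :
    ∑ i, v i • f i = ∑ i ∈ S, v i • f i := by
  refine (Finset.sum_subset (Finset.subset_univ S) ?_).symm
  intro i _ hiS
  by_cases hv : v i = 0
  · simp [hv]
  · exact absurd (h i hv) hiS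

lemma JPsum_three {v : Fin n → ℂ} {x y z : Fin n} (hxy : x ≠ y) (hxz : x ≠ z) (hyz : y ≠ z)
    (hcov : ∀ i, v i ≠ 0 → i = x ∨ i = y ∨ i = z) :
    ∑ i, v i • f i = v x • f x + v y • f y + v z • f z := by
  rw [JPsum_subset f (S := {x, y, z}) (fun i hi => by rcases hcov i hi with rfl|rfl|rfl <;> simp)]
  rw [Finset.sum_insert (by simp [hxy, hxz]), Finset.sum_insert (by simp [hyz]),
    Finset.sum_singleton, add_assoc]

lemma JPone (hf0 : ∀ i, f i ≠ 0) {v : Fin n → ℂ} (hrel : ∑ i, v i • f i = 0)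
    {x : Fin n} (hcov : ∀ i, v i ≠ 0 → i = x) : v = 0 := by
  have hx : v x = 0 := by
    by_contra hvx
    rw [JPsum_subset f (S := {x}) (fun i hi => by simp [hcov i hi]), Finset.sum_singleton] at hrel
    rcases smul_eq_zero.mp hrel with h | h
    · exact hvx h
    · exact hf0 x h
  funext i
  by_cases h : v i = 0
  · exact h
  · have := hcov i h; subst this; exact hx

lemma JPtwo (hf0 : ∀ i, f i ≠ 0) (hprop : ∀ i j : Fin n, i ≠ j → ∀ a : ℂ, f i ≠ a • f j)
    {v : Fin n → ℂ} (hrel : ∑ i, v i • f i = 0)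
    {x y : Fin n} (hcov : ∀ i, v i ≠ 0 → i = x ∨ i = y) : v = 0 := by
  by_cases hxy : x = y
  · subst hxy
    exact JPone f hf0 hrel (fun i hi => by rcases hcov i hi with h | h <;> exact h)
  by_cases hvx : v x = 0
  · refine JPone f hf0 hrel (x := y) (fun i hi => ?_)
    rcases hcov i hi with rfl | h
    · exact absurd hvx hi
    · exact h
  by_cases hvy : v y = 0
  · refine JPone f hf0 hrel (x := x) (fun i hi => ?_)
    rcases hcov i hi with h | rfl
    · exact h
    · exact absurd hvy hi
  exfalso
  rw [JPsum_subset f (S := {x, y}) (fun i hi => by rcases hcov i hi with rfl|rfl <;> simp),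
    Finset.sum_insert (by simp [hxy]), Finset.sum_singleton] at hrel
  have h4 : v x • f x = (-(v y)) • f y := by
    rw [neg_smul]
    exact eq_neg_of_add_eq_zero_left hrel
  have h5 : f x = ((v x)⁻¹ * (-(v y))) • f y := by
    rw [← smul_smul, ← h4, smul_smul, inv_mul_cancel₀ hvx, one_smul]
  exact hprop x y hxy _ h5

lemma JPli3 {x y z : Module.Dual ℂ (Fin l → ℂ)} (h : LinearIndependent ℂ ![x, y, z]) {a b c : ℂ}
    (hrel : a • x + b • y + c • z = 0) : a = 0 ∧ b = 0 ∧ c = 0 := by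
  have h2 := Fintype.linearIndependent_iff.mp h ![a, b, c] (by
    simpa [Fin.sum_univ_three] using hrel)
  exact ⟨h2 0, h2 1, h2 2⟩

lemma JPli_rank {x y z : Module.Dual ℂ (Fin l → ℂ)} (h : LinearIndependent ℂ ![x, y, z])
    {U : Submodule ℂ (Module.Dual ℂ (Fin l → ℂ))} (hx : x ∈ U) (hy : y ∈ U) (hz : z ∈ U) :
    3 ≤ Module.finrank ℂ U := by
  have h2 : LinearIndependent ℂ (![⟨x, hx⟩, ⟨y, hy⟩, ⟨z, hz⟩] : Fin 3 → U) := by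
    apply LinearIndependent.of_comp U.subtype
    have : U.subtype ∘ (![⟨x, hx⟩, ⟨y, hy⟩, ⟨z, hz⟩] : Fin 3 → U) = ![x, y, z] := by
      funext i; fin_cases i <;> rfl
    rw [this]; exact h
  simpa using h2.fintype_card_le_finrank

lemma JPpoint {v : Fin n → ℂ} (hrel : ∑ i, v i • f i = 0) {p : Fin n} (hvp : v p ≠ 0) :
    f p ∈ Submodule.span ℂ (f '' {i | v i ≠ 0 ∧ i ≠ p}) := by
  have h1 : v p • f p = -∑ i ∈ Finset.univ.erase p, v i • f i := by
    rw [eq_neg_iff_add_eq_zero, add_comm, Finset.sum_erase_add _ _ (Finset.mem_univ p), hrel]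
  have h2 : f p = (-(v p)⁻¹) • ∑ i ∈ Finset.univ.erase p, v i • f i := by
    rw [neg_smul, ← smul_neg, ← h1, smul_smul, inv_mul_cancel₀ hvp, one_smul]
  rw [h2]
  refine Submodule.smul_mem _ _ (Submodule.sum_mem _ (fun i hi => ?_))
  by_cases hvi : v i = 0
  · simp [hvi]
  · exact Submodule.smul_mem _ _ (subset_span ⟨i, ⟨hvi, Finset.ne_of_mem_erase hi⟩, rfl⟩)

set_option maxHeartbeats 2000000 in
set_option synthInstance.maxHeartbeats 400000 in
lemma JPstep (hf0 : ∀ i, f i ≠ 0) (hprop : ∀ i j : Fin n, i ≠ j → ∀ a : ℂ, f i ≠ a • f j)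
    {B C : Finset (Fin n)} (h : IsSolvableExtension f B C) :
    Module.finrank ℂ (span ℂ (JPGen f C)) + B.card + 1
      = Module.finrank ℂ (span ℂ (JPGen f B)) + C.card := by
  classical
  obtain ⟨hBC, hCl, hComp, hSolv⟩ := h
  have hBsub : B ⊆ C := hBC.subset
  obtain ⟨a₀, ha₀C, ha₀B⟩ := Finset.exists_of_ssubset hBC
  have ha₀N : a₀ ∈ C \ B := Finset.mem_sdiff.mpr ⟨ha₀C, ha₀B⟩
  -- supports of elements of span (JPGen f D)
  have hK2supp : ∀ (D : Finset (Fin n)), ∀ v ∈ span ℂ (JPGen f D), ∀ i, i ∉ D → v i = 0 := by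
    intro D v hv
    induction hv using Submodule.span_induction with
    | mem x hx => exact fun i hi => by by_contra h0; exact hi (hx.2.1 i h0)
    | zero => simp
    | add x y _ _ hx hy => intro i hi; simp [hx i hi, hy i hi]
    | smul a x _ hx => intro i hi; simp [hx i hi]
  -- basic non-membership facts
  have noSpan2 : ∀ γ ∈ B, ∀ δ ∈ B, ∀ a ∈ C \ B,
      f a ∉ span ℂ ({f γ, f δ} : Set (Module.Dual ℂ (Fin l → ℂ))) := by
    intro γ hγ δ hδ a haN hm
    have haB : a ∉ B := (Finset.mem_sdiff.mp haN).2
    by_cases hgd : γ = δ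
    · subst hgd
      rw [Set.pair_eq_singleton, mem_span_singleton] at hm
      obtain ⟨c, hc⟩ := hm
      exact hprop a γ (fun h0 => haB (h0 ▸ hγ)) c hc.symm
    · obtain ⟨p, q, hpq⟩ := mem_span_pair.mp hm
      have hcomb : p • f γ + q • f δ + (-1 : ℂ) • f a = 0 := by
        rw [neg_one_smul, hpq, add_neg_cancel]
      have := (JPli3 (hCl γ hγ δ hδ hgd a haN) hcomb).2.2
      norm_num at this
  have hnoSub : ∀ a ∈ C \ B, ∀ (S : Set (Fin n)), (∀ i ∈ S, i ∈ B) → ∀ γ δ : Fin n,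
      (∀ i ∈ S, i = γ ∨ i = δ) → f a ∈ span ℂ (f '' S) → False := by
    intro a haN S hSB γ δ hS hmem
    by_cases hγ : γ ∈ S <;> by_cases hδ : δ ∈ S
    · have himg : f '' S ⊆ {f γ, f δ} := by
        rintro _ ⟨i, hi, rfl⟩; rcases hS i hi with rfl|rfl <;> simp
      exact noSpan2 γ (hSB γ hγ) δ (hSB δ hδ) a haN (span_mono himg hmem)
    · have himg : f '' S ⊆ ({f γ, f γ} : Set _) := by
        rintro _ ⟨i, hi, rfl⟩
        rcases hS i hi with rfl|rfl
        · simp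
        · exact absurd hi hδ
      exact noSpan2 γ (hSB γ hγ) γ (hSB γ hγ) a haN (span_mono himg hmem)
    · have himg : f '' S ⊆ ({f δ, f δ} : Set _) := by
        rintro _ ⟨i, hi, rfl⟩
        rcases hS i hi with rfl|rfl
        · exact absurd hi hγ
        · simp
      exact noSpan2 δ (hSB δ hδ) δ (hSB δ hδ) a haN (span_mono himg hmem)
    · have himg : f '' S ⊆ (∅ : Set _) := by
        rintro _ ⟨i, hi, rfl⟩
        rcases hS i hi with rfl|rfl
        · exact absurd hi hγ
        · exact absurd hi hδ
      have := span_mono himg hmem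
      rw [Submodule.span_empty, Submodule.mem_bot] at this
      exact hf0 a this
  have hnoSpan3 : ∀ γ ∈ B, ∀ δ ∈ B, ∀ ε ∈ B, ∀ a ∈ C \ B,
      Module.finrank ℂ (span ℂ ({f γ, f δ, f ε} : Set (Module.Dual ℂ (Fin l → ℂ)))) ≤ 2 →
      f a ∈ span ℂ ({f γ, f δ, f ε} : Set (Module.Dual ℂ (Fin l → ℂ))) → False := by
    intro γ hγ δ hδ ε hε a haN hrk hmem
    by_cases hgd : γ = δ
    · subst hgd
      rw [Set.insert_idem] at hmem
      exact noSpan2 γ hγ ε hε a haN hmem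
    · have h3 := JPli_rank (hCl γ hγ δ hδ hgd a haN)
        (subset_span (by simp) : f γ ∈ span ℂ ({f γ, f δ, f ε} : Set _))
        (subset_span (by simp) : f δ ∈ span ℂ ({f γ, f δ, f ε} : Set _)) hmem
      omega
  -- the w-family
  have hwex : ∀ b ∈ (C \ B).erase a₀, ∃ w : Fin n → ℂ, ∃ α : Fin n, α ∈ B ∧
      (∑ i, w i • f i) = 0 ∧ w b = 1 ∧ (∀ i, w i ≠ 0 → i = b ∨ i = a₀ ∨ i = α) ∧
      f α ∈ span ℂ ({f a₀, f b} : Set (Module.Dual ℂ (Fin l → ℂ))) := by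
    intro b hb
    have hbN : b ∈ C \ B := Finset.mem_of_mem_erase hb
    have hba : b ≠ a₀ := Finset.ne_of_mem_erase hb
    obtain ⟨α, hαB, hspan⟩ := hComp a₀ ha₀N b hbN (Ne.symm hba)
    obtain ⟨s, t, hst⟩ := mem_span_pair.mp hspan
    have hαa : α ≠ a₀ := fun h0 => ha₀B (h0 ▸ hαB)
    have hαb : α ≠ b := fun h0 => (Finset.mem_sdiff.mp hbN).2 (h0 ▸ hαB)
    have ht : t ≠ 0 := by
      intro h0
      rw [h0, zero_smul, add_zero] at hst
      exact hprop α a₀ hαa s hst.symm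
    set w0 : Fin n → ℂ :=
      fun i => if i = b then 1 else if i = a₀ then s / t else if i = α then -(1 / t) else 0
      with hw0
    have hw0b : w0 b = 1 := by simp [hw0]
    have hw0a : w0 a₀ = s / t := by simp [hw0, Ne.symm hba]
    have hw0α : w0 α = -(1 / t) := by simp [hw0, hαb, hαa]
    have hw0cov : ∀ i, w0 i ≠ 0 → i = b ∨ i = a₀ ∨ i = α := by
      intro i hi
      rw [hw0] at hi
      simp only at hi
      split_ifs at hi with h1 h2 h3
      · exact Or.inl h1
      · exact Or.inr (Or.inl h2)
      · exact Or.inr (Or.inr h3)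
      · exact absurd rfl hi
    refine ⟨w0, α, hαB, ?_, hw0b, hw0cov, hspan⟩
    rw [JPsum_three f hba (Ne.symm hαb) (Ne.symm hαa) hw0cov, hw0b, hw0a, hw0α]
    have e1 : t • ((1 : ℂ) • f b + (s / t) • f a₀ + (-(1 / t)) • f α) = 0 := by
      rw [smul_add, smul_add, smul_smul, smul_smul, smul_smul, mul_one,
        mul_div_cancel₀ s ht, show t * -(1 / t) = -1 by field_simp, neg_one_smul]
      have key : s • f a₀ + t • f b - f α = 0 := by rw [hst]; exact sub_self _
      calc t • f b + s • f a₀ + -f α = s • f a₀ + t • f b - f α := by abel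
      _ = 0 := key
    exact (smul_eq_zero.mp e1).resolve_left ht
  choose! w α hαB hwker hwb hwcov hwspan using hwex
  have hwzero : ∀ b ∈ (C \ B).erase a₀, ∀ j ∈ (C \ B).erase a₀, j ≠ b → w b j = 0 := by
    intro b hb j hj hjb
    by_contra h0
    rcases hwcov b hb j h0 with h1 | h1 | h1
    · exact hjb h1
    · exact (Finset.notMem_erase a₀ (C \ B)) (h1 ▸ hj)
    · exact (Finset.mem_sdiff.mp (Finset.mem_of_mem_erase hj)).2 (by rw [h1]; exact hαB b hb)
  set wfam : ↥((C \ B).erase a₀) → (Fin n → ℂ) := fun b => w ↑b with hwfam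
  set W : Submodule ℂ (Fin n → ℂ) := span ℂ (Set.range wfam) with hWdef
  have hwM : ∀ b (hb : b ∈ (C \ B).erase a₀), w b ∈ span ℂ (JPGen f B) ⊔ W := by
    intro b hb
    exact (le_sup_right : W ≤ _) (subset_span ⟨⟨b, hb⟩, rfl⟩)
  -- core A : support {a₀, b, β}
  have coreA : ∀ b ∈ (C \ B).erase a₀, ∀ β ∈ B, ∀ v : Fin n → ℂ,
      (∑ i, v i • f i) = 0 → (∀ i, v i ≠ 0 → i = a₀ ∨ i = b ∨ i = β) →
      v ∈ span ℂ (JPGen f B) ⊔ W := by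
    intro b hb β hβ v hrel hcov
    set v' := v - v b • w b with hv'
    have hrel' : ∑ i, v' i • f i = 0 := by
      simp only [hv', Pi.sub_apply, Pi.smul_apply, smul_eq_mul, sub_smul, mul_smul,
        Finset.sum_sub_distrib, hrel, ← Finset.smul_sum, hwker b hb, smul_zero, sub_zero]
    have hv'b : v' b = 0 := by simp [hv', hwb b hb]
    have hcov' : ∀ i, v' i ≠ 0 → i = a₀ ∨ i = α b ∨ i = β := by
      intro i hi
      by_cases hib : i = b
      · subst hib; exact absurd hv'b hi
      have hor : v i ≠ 0 ∨ w b i ≠ 0 := by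
        by_contra hcon
        push_neg at hcon
        exact hi (by simp [hv', hcon.1, hcon.2])
      rcases hor with h1 | h1
      · rcases hcov i h1 with h2|h2|h2
        · exact Or.inl h2
        · exact absurd h2 hib
        · exact Or.inr (Or.inr h2)
      · rcases hwcov b hb i h1 with h2|h2|h2
        · exact absurd h2 hib
        · exact Or.inl h2
        · exact Or.inr (Or.inl h2)
    have hv'a₀ : v' a₀ = 0 := by
      by_contra h0
      refine hnoSub a₀ ha₀N {i | v' i ≠ 0 ∧ i ≠ a₀} ?_ (α b) β ?_ (JPpoint f hrel' h0)
      · rintro i ⟨hi1, hi2⟩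
        rcases hcov' i hi1 with rfl|rfl|rfl
        · exact absurd rfl hi2
        · exact hαB b hb
        · exact hβ
      · rintro i ⟨hi1, hi2⟩
        rcases hcov' i hi1 with rfl|rfl|rfl
        · exact absurd rfl hi2
        · exact Or.inl rfl
        · exact Or.inr rfl
    have hv'Gen : v' ∈ JPGen f B := by
      refine ⟨hrel', ?_, α b, β, β, ?_⟩
      · intro i hi
        rcases hcov' i hi with rfl|rfl|rfl
        · exact absurd hv'a₀ hi
        · exact hαB b hb
        · exact hβ
      · intro i hi
        rcases hcov' i hi with rfl|rfl|rfl
        · exact absurd hv'a₀ hi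
        · exact Or.inl rfl
        · exact Or.inr (Or.inl rfl)
    have hsum : v = v' + v b • w b := by rw [hv']; abel
    rw [hsum]
    exact add_mem ((le_sup_left : span ℂ (JPGen f B) ≤ _) (subset_span hv'Gen))
      (Submodule.smul_mem _ _ (hwM b hb))
  -- core 2 : support {a, b, β} with a b new, β old
  have core2 : ∀ a ∈ C \ B, ∀ b ∈ C \ B, a ≠ b → ∀ β ∈ B, ∀ v : Fin n → ℂ,
      (∑ i, v i • f i) = 0 → (∀ i, v i ≠ 0 → i = a ∨ i = b ∨ i = β) →
      v ∈ span ℂ (JPGen f B) ⊔ W := by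
    intro a haN b hbN hab β hβ v hrel hcov
    by_cases ha0 : a = a₀
    · subst ha0
      exact coreA b (Finset.mem_erase.mpr ⟨fun h0 => hab h0.symm, hbN⟩) β hβ v hrel hcov
    by_cases hb0 : b = a₀
    · subst hb0
      exact coreA a (Finset.mem_erase.mpr ⟨ha0, haN⟩) β hβ v hrel
        (fun i hi => by rcases hcov i hi with h|h|h <;> tauto)
    have haE : a ∈ (C \ B).erase a₀ := Finset.mem_erase.mpr ⟨ha0, haN⟩
    have hbE : b ∈ (C \ B).erase a₀ := Finset.mem_erase.mpr ⟨hb0, hbN⟩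
    by_cases hvβ : v β = 0
    · have hzero : v = 0 := by
        refine JPtwo f hf0 hprop hrel (x := a) (y := b) (fun i hi => ?_)
        rcases hcov i hi with h|h|h
        · exact Or.inl h
        · exact Or.inr h
        · subst h; exact absurd hvβ hi
      rw [hzero]; exact zero_mem _
    have hβspan : f β ∈ span ℂ ({f a, f b} : Set (Module.Dual ℂ (Fin l → ℂ))) := by
      refine span_mono ?_ (JPpoint f hrel hvβ)
      rintro _ ⟨i, ⟨hi1, hi2⟩, rfl⟩
      rcases hcov i hi1 with rfl|rfl|rfl
      · simp
      · simp
      · exact absurd rfl hi2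
    have hsolv := hSolv a haN a₀ ha₀N b hbN ha0 (fun h0 => hb0 h0.symm) hab
      (α a) (hαB a haE) (α b) (hαB b hbE) β hβ
      (by rw [Set.pair_comm]; exact hwspan a haE) (hwspan b hbE) hβspan
    have hrk : Module.finrank ℂ
        (span ℂ ({f (α a), f (α b), f β} : Set (Module.Dual ℂ (Fin l → ℂ)))) ≤ 2 := by
      rcases hsolv with ⟨h1, h2⟩ | h2
      · rw [h1, h2]
        have hset : ({f β, f β, f β} : Set (Module.Dual ℂ (Fin l → ℂ))) = {f β} := by simp
        rw [hset, finrank_span_singleton (hf0 β)]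
        norm_num
      · exact h2
    set v'' := v - v a • w a - v b • w b with hv''
    have hrel'' : ∑ i, v'' i • f i = 0 := by
      simp only [hv'', Pi.sub_apply, Pi.smul_apply, smul_eq_mul, sub_smul, mul_smul,
        Finset.sum_sub_distrib, hrel, ← Finset.smul_sum, hwker a haE, hwker b hbE,
        smul_zero, sub_zero]
    have hv''a : v'' a = 0 := by
      simp [hv'', hwb a haE, hwzero b hbE a haE hab]
    have hv''b : v'' b = 0 := by
      simp [hv'', hwb b hbE, hwzero a haE b hbE (Ne.symm hab)]
    have hcov'' : ∀ i, v'' i ≠ 0 → i = a₀ ∨ i = β ∨ i = α a ∨ i = α b := by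
      intro i hi
      by_cases hia : i = a
      · subst hia; exact absurd hv''a hi
      by_cases hib : i = b
      · subst hib; exact absurd hv''b hi
      have hor : v i ≠ 0 ∨ w a i ≠ 0 ∨ w b i ≠ 0 := by
        by_contra hcon
        push_neg at hcon
        exact hi (by simp [hv'', hcon.1, hcon.2.1, hcon.2.2])
      rcases hor with h1 | h1 | h1
      · rcases hcov i h1 with h2|h2|h2 <;> tauto
      · rcases hwcov a haE i h1 with h2|h2|h2 <;> tauto
      · rcases hwcov b hbE i h1 with h2|h2|h2 <;> tauto
    have hv''a₀ : v'' a₀ = 0 := by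
      by_contra h0
      have hmem := JPpoint f hrel'' h0
      have hsub : f '' {i | v'' i ≠ 0 ∧ i ≠ a₀} ⊆
          ({f (α a), f (α b), f β} : Set (Module.Dual ℂ (Fin l → ℂ))) := by
        rintro _ ⟨i, ⟨hi1, hi2⟩, rfl⟩
        rcases hcov'' i hi1 with rfl|rfl|rfl|rfl
        · exact absurd rfl hi2
        · simp
        · simp
        · simp
      exact hnoSpan3 (α a) (hαB a haE) (α b) (hαB b hbE) β hβ a₀ ha₀N hrk
        (span_mono hsub hmem)
    have hv''Gen : v'' ∈ JPGen f B := by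
      refine ⟨hrel'', ?_, β, α a, α b, ?_⟩
      · intro i hi
        rcases hcov'' i hi with rfl|rfl|rfl|rfl
        · exact absurd hv''a₀ hi
        · exact hβ
        · exact hαB a haE
        · exact hαB b hbE
      · intro i hi
        rcases hcov'' i hi with rfl|rfl|rfl|rfl
        · exact absurd hv''a₀ hi
        · exact Or.inl rfl
        · exact Or.inr (Or.inl rfl)
        · exact Or.inr (Or.inr rfl)
    have hsum : v = v'' + v a • w a + v b • w b := by rw [hv'']; abel
    rw [hsum]
    exact add_mem (add_mem ((le_sup_left : span ℂ (JPGen f B) ≤ _) (subset_span hv''Gen))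
      (Submodule.smul_mem _ _ (hwM a haE))) (Submodule.smul_mem _ _ (hwM b hbE))
  -- core 3 : support {a, b, c} all new
  have core3 : ∀ a ∈ C \ B, ∀ b ∈ C \ B, ∀ c ∈ C \ B, a ≠ b → a ≠ c → b ≠ c →
      ∀ v : Fin n → ℂ, (∑ i, v i • f i) = 0 → (∀ i, v i ≠ 0 → i = a ∨ i = b ∨ i = c) →
      v ∈ span ℂ (JPGen f B) ⊔ W := by
    intro a haN b hbN c hcN hab hac hbc v hrel hcov
    obtain ⟨β, hβ, hspan⟩ := hComp a haN b hbN hab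
    obtain ⟨p, q, hpq⟩ := mem_span_pair.mp hspan
    have haβ : a ≠ β := fun h0 => (Finset.mem_sdiff.mp haN).2 (h0 ▸ hβ)
    have hbβ : b ≠ β := fun h0 => (Finset.mem_sdiff.mp hbN).2 (h0 ▸ hβ)
    have hcβ : c ≠ β := fun h0 => (Finset.mem_sdiff.mp hcN).2 (h0 ▸ hβ)
    have hq : q ≠ 0 := by
      intro h0
      rw [h0, zero_smul, add_zero] at hpq
      exact hprop β a (Ne.symm haβ) p hpq.symm
    set u : Fin n → ℂ := fun i => if i = a then p else if i = b then q else if i = β then -1 else 0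
      with hu
    have hucov : ∀ i, u i ≠ 0 → i = a ∨ i = b ∨ i = β := by
      intro i hi
      simp only [hu] at hi
      split_ifs at hi with h1 h2 h3
      · exact Or.inl h1
      · exact Or.inr (Or.inl h2)
      · exact Or.inr (Or.inr h3)
      · exact absurd rfl hi
    have hua : u a = p := by simp [hu]
    have hub : u b = q := by simp [hu, Ne.symm hab]
    have huβ : u β = -1 := by simp [hu, Ne.symm haβ, Ne.symm hbβ]
    have hurel : ∑ i, u i • f i = 0 := by
      rw [JPsum_three f hab haβ hbβ hucov, hua, hub, huβ, neg_one_smul, hpq, add_neg_cancel]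
    have huM : u ∈ span ℂ (JPGen f B) ⊔ W := core2 a haN b hbN hab β hβ u hurel hucov
    set v' := v - (v b / q) • u with hv'
    have hrel' : ∑ i, v' i • f i = 0 := by
      simp only [hv', Pi.sub_apply, Pi.smul_apply, smul_eq_mul, sub_smul, mul_smul,
        Finset.sum_sub_distrib, hrel, ← Finset.smul_sum, hurel, smul_zero, sub_zero]
    have hv'b : v' b = 0 := by
      simp only [hv', Pi.sub_apply, Pi.smul_apply, smul_eq_mul, hub]
      rw [div_mul_cancel₀ _ hq, sub_self]
    have hcov' : ∀ i, v' i ≠ 0 → i = a ∨ i = c ∨ i = β := by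
      intro i hi
      by_cases hib : i = b
      · subst hib; exact absurd hv'b hi
      have hor : v i ≠ 0 ∨ u i ≠ 0 := by
        by_contra hcon
        push_neg at hcon
        exact hi (by simp [hv', hcon.1, hcon.2])
      rcases hor with h1 | h1
      · rcases hcov i h1 with h2|h2|h2
        · exact Or.inl h2
        · exact absurd h2 hib
        · exact Or.inr (Or.inl h2)
      · rcases hucov i h1 with h2|h2|h2
        · exact Or.inl h2
        · exact absurd h2 hib
        · exact Or.inr (Or.inr h2)
    have hv'M : v' ∈ span ℂ (JPGen f B) ⊔ W := core2 a haN c hcN hac β hβ v' hrel' hcov'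
    have hsum : v = v' + (v b / q) • u := by rw [hv']; abel
    rw [hsum]
    exact add_mem hv'M (Submodule.smul_mem _ _ huM)
  -- main inclusion
  have hmain : span ℂ (JPGen f C) ≤ span ℂ (JPGen f B) ⊔ W := by
    rw [span_le]
    rintro v ⟨hrel, hsuppC, x, y, z, hcov⟩
    set T := (C \ B).filter (fun i => v i ≠ 0) with hT
    have hTmem : ∀ i, i ∈ T ↔ (i ∈ C \ B ∧ v i ≠ 0) := fun i => Finset.mem_filter
    have hTsub : T ⊆ {x, y, z} := by
      intro i hi
      rcases (hTmem i).mp hi with ⟨_, h2⟩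
      rcases hcov i h2 with rfl|rfl|rfl <;> simp
    have h3' : ({x, y, z} : Finset (Fin n)).card ≤ 3 := by
      apply le_trans (Finset.card_insert_le _ _)
      have := Finset.card_insert_le y ({z} : Finset (Fin n))
      simp only [Finset.card_singleton] at this ⊢
      omega
    have hTcard : T.card ≤ 3 := le_trans (Finset.card_le_card hTsub) h3'
    have hc4 : T.card = 0 ∨ T.card = 1 ∨ T.card = 2 ∨ T.card = 3 := by omega
    rcases hc4 with h0|h1|h2|h3''
    · -- support inside B
      have hsuppB : ∀ i, v i ≠ 0 → i ∈ B := by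
        intro i hi
        by_contra hiB
        have : i ∈ T := (hTmem i).mpr ⟨Finset.mem_sdiff.mpr ⟨hsuppC i hi, hiB⟩, hi⟩
        rw [Finset.card_eq_zero.mp h0] at this
        exact absurd this (Finset.notMem_empty i)
      exact SetLike.mem_coe.mpr
        ((le_sup_left : span ℂ (JPGen f B) ≤ _) (subset_span ⟨hrel, hsuppB, x, y, z, hcov⟩))
    · -- exactly one new support point : impossible
      exfalso
      obtain ⟨a, hTa⟩ := Finset.card_eq_one.mp h1
      have haT : a ∈ T := by rw [hTa]; exact Finset.mem_singleton_self a
      obtain ⟨haN, hva⟩ := (hTmem a).mp haT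
      have hS : ∀ i, v i ≠ 0 → i ≠ a → i ∈ B := by
        intro i h1' h2'
        by_contra hiB
        have : i ∈ T := (hTmem i).mpr ⟨Finset.mem_sdiff.mpr ⟨hsuppC i h1', hiB⟩, h1'⟩
        rw [hTa, Finset.mem_singleton] at this
        exact h2' this
      have hmem := JPpoint f hrel hva
      rcases hcov a hva with rfl|rfl|rfl
      · refine hnoSub a haN {i | v i ≠ 0 ∧ i ≠ a} (fun i hi => hS i hi.1 hi.2) y z
          (fun i hi => ?_) hmem
        rcases hcov i hi.1 with h|h|h
        · exact absurd h hi.2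
        · exact Or.inl h
        · exact Or.inr h
      · refine hnoSub a haN {i | v i ≠ 0 ∧ i ≠ a} (fun i hi => hS i hi.1 hi.2) x z
          (fun i hi => ?_) hmem
        rcases hcov i hi.1 with h|h|h
        · exact Or.inl h
        · exact absurd h hi.2
        · exact Or.inr h
      · refine hnoSub a haN {i | v i ≠ 0 ∧ i ≠ a} (fun i hi => hS i hi.1 hi.2) x y
          (fun i hi => ?_) hmem
        rcases hcov i hi.1 with h|h|h
        · exact Or.inl h
        · exact Or.inr h
        · exact absurd h hi.2
    · -- two new support points
      obtain ⟨a, b, hab, hTab⟩ := Finset.card_eq_two.mp h2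
      have haT : a ∈ T := by rw [hTab]; simp
      have hbT : b ∈ T := by rw [hTab]; simp
      obtain ⟨haN, hva⟩ := (hTmem a).mp haT
      obtain ⟨hbN, hvb⟩ := (hTmem b).mp hbT
      have hrex : ∃ r, ∀ i, v i ≠ 0 → i = a ∨ i = b ∨ i = r := by
        rcases hcov a hva with rfl|rfl|rfl <;> rcases hcov b hvb with rfl|rfl|rfl
        all_goals first
          | exact absurd rfl hab
          | exact ⟨x, fun i hi => by rcases hcov i hi with h|h|h <;> tauto⟩
          | exact ⟨y, fun i hi => by rcases hcov i hi with h|h|h <;> tauto⟩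
          | exact ⟨z, fun i hi => by rcases hcov i hi with h|h|h <;> tauto⟩
      obtain ⟨r, hrcov⟩ := hrex
      by_cases hr : v r = 0 ∨ r = a ∨ r = b
      · have hzero : v = 0 := by
          refine JPtwo f hf0 hprop hrel (x := a) (y := b) (fun i hi => ?_)
          rcases hrcov i hi with h|h|h
          · exact Or.inl h
          · exact Or.inr h
          · subst h
            rcases hr with h'|h'|h'
            · exact absurd h' hi
            · exact Or.inl h'
            · exact Or.inr h'
        rw [hzero]
        exact SetLike.mem_coe.mpr (zero_mem _)
      · push_neg at hr
        obtain ⟨hvr, hra, hrb⟩ := hr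
        have hrB : r ∈ B := by
          by_contra hrB
          have : r ∈ T := (hTmem r).mpr ⟨Finset.mem_sdiff.mpr ⟨hsuppC r hvr, hrB⟩, hvr⟩
          rw [hTab] at this
          rcases Finset.mem_insert.mp this with h'|h'
          · exact hra h'
          · exact hrb (Finset.mem_singleton.mp h')
        exact SetLike.mem_coe.mpr (core2 a haN b hbN hab r hrB v hrel hrcov)
    · -- three new support points
      obtain ⟨a, b, c, hab, hac, hbc, hTabc⟩ := Finset.card_eq_three.mp h3''
      have haT : a ∈ T := by rw [hTabc]; simp
      have hbT : b ∈ T := by rw [hTabc]; simp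
      have hcT : c ∈ T := by rw [hTabc]; simp
      obtain ⟨haN, hva⟩ := (hTmem a).mp haT
      obtain ⟨hbN, hvb⟩ := (hTmem b).mp hbT
      obtain ⟨hcN, hvc⟩ := (hTmem c).mp hcT
      have hcov3 : ∀ i, v i ≠ 0 → i = a ∨ i = b ∨ i = c := by
        rcases hcov a hva with rfl|rfl|rfl <;> rcases hcov b hvb with rfl|rfl|rfl <;>
          rcases hcov c hvc with rfl|rfl|rfl <;>
          first
            | exact absurd rfl hab
            | exact absurd rfl hac
            | exact absurd rfl hbc
            | exact fun i hi => by rcases hcov i hi with h|h|h <;> tauto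
      exact SetLike.mem_coe.mpr (core3 a haN b hbN c hcN hab hac hbc v hrel hcov3)
  -- reverse inclusion
  have hBle : span ℂ (JPGen f B) ≤ span ℂ (JPGen f C) :=
    span_mono (fun v hv => ⟨hv.1, fun i hi => hBsub (hv.2.1 i hi), hv.2.2⟩)
  have hwK2C : ∀ b (hb : b ∈ (C \ B).erase a₀), w b ∈ span ℂ (JPGen f C) := by
    intro b hb
    refine subset_span ⟨hwker b hb, ?_, b, a₀, α b, hwcov b hb⟩
    intro i hi
    rcases hwcov b hb i hi with rfl|rfl|rfl
    · exact (Finset.mem_sdiff.mp (Finset.mem_of_mem_erase hb)).1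
    · exact ha₀C
    · exact hBsub (hαB b hb)
  have hWle : W ≤ span ℂ (JPGen f C) := by
    rw [hWdef, span_le]
    rintro _ ⟨b, rfl⟩
    exact SetLike.mem_coe.mpr (hwK2C ↑b b.2)
  have hMeq : span ℂ (JPGen f B) ⊔ W = span ℂ (JPGen f C) :=
    le_antisymm (sup_le hBle hWle) hmain
  -- rank computation
  set E : (Fin n → ℂ) →ₗ[ℂ] (↥((C \ B).erase a₀) → ℂ) :=
    LinearMap.funLeft ℂ ℂ (fun b : ↥((C \ B).erase a₀) => (b : Fin n)) with hE
  set E' := E.comp (span ℂ (JPGen f C)).subtype with hE'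
  have hE'app : ∀ (y : ↥(span ℂ (JPGen f C))) (b : ↥((C \ B).erase a₀)),
      E' y b = (y : Fin n → ℂ) ↑b := fun y b => rfl
  have hker : LinearMap.ker E' = Submodule.comap (span ℂ (JPGen f C)).subtype
      (span ℂ (JPGen f B)) := by
    apply le_antisymm
    · rintro ⟨v, hv⟩ hvk
      rw [LinearMap.mem_ker] at hvk
      have hveval : ∀ b : ↥((C \ B).erase a₀), v ↑b = 0 := by
        intro b
        have := congrFun hvk b
        rwa [hE'app ⟨v, hv⟩ b] at this
      rw [Submodule.mem_comap]
      show v ∈ span ℂ (JPGen f B)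
      have hvM : v ∈ span ℂ (JPGen f B) ⊔ W := hMeq.symm ▸ hv
      obtain ⟨p, hp, qq, hq, hpq⟩ := Submodule.mem_sup.mp hvM
      rw [hWdef] at hq
      obtain ⟨coef, hcoef⟩ := (mem_span_range_iff_exists_fun ℂ).mp hq
      have hc0 : ∀ b : ↥((C \ B).erase a₀), coef b = 0 := by
        intro b
        have h1 : v ↑b = 0 := hveval b
        have h2 : v ↑b = p ↑b + ∑ b' : ↥((C \ B).erase a₀), coef b' * wfam b' ↑b := by
          rw [← hpq, ← hcoef]
          simp [Finset.sum_apply]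
        have h3 : p ↑b = 0 :=
          hK2supp B p hp ↑b (Finset.mem_sdiff.mp (Finset.mem_of_mem_erase b.2)).2
        have h4 : ∑ b' : ↥((C \ B).erase a₀), coef b' * wfam b' ↑b = coef b := by
          rw [Finset.sum_eq_single b]
          · rw [hwfam]
            simp only
            rw [hwb ↑b b.2, mul_one]
          · intro b' _ hne
            rw [hwfam]
            simp only
            rw [hwzero ↑b' b'.2 ↑b b.2 (fun hc => hne (Subtype.ext hc).symm), mul_zero]
          · intro hb'
            exact absurd (Finset.mem_univ b) hb'
        rw [h3, zero_add, h4] at h2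
        rw [h1] at h2
        exact h2.symm
      have hq0 : qq = 0 := by
        rw [← hcoef]
        simp [hc0]
      rw [← hpq, hq0, add_zero]
      exact hp
    · rintro ⟨v, hv⟩ hvB
      rw [Submodule.mem_comap] at hvB
      rw [LinearMap.mem_ker]
      funext b
      rw [hE'app ⟨v, hv⟩ b]
      exact hK2supp B v hvB ↑b (Finset.mem_sdiff.mp (Finset.mem_of_mem_erase b.2)).2
  have hrange : LinearMap.range E' = ⊤ := by
    rw [eq_top_iff]
    rintro x -
    have hx : x = ∑ b : ↥((C \ B).erase a₀), x b • E' ⟨w ↑b, hwK2C ↑b b.2⟩ := by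
      funext cc
      rw [Finset.sum_apply, Finset.sum_eq_single cc]
      · have h9 : E' ⟨w ↑cc, hwK2C ↑cc cc.2⟩ cc = w ↑cc ↑cc := rfl
        rw [Pi.smul_apply, h9, hwb ↑cc cc.2, smul_eq_mul, mul_one]
      · intro b _ hbc
        have h9 : E' ⟨w ↑b, hwK2C ↑b b.2⟩ cc = w ↑b ↑cc := rfl
        rw [Pi.smul_apply, h9,
          hwzero ↑b b.2 ↑cc cc.2 (fun hc => hbc (Subtype.ext hc).symm), smul_eq_mul, mul_zero]
      · intro hcc
        exact absurd (Finset.mem_univ cc) hcc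
    rw [hx]
    exact Submodule.sum_mem _ (fun b _ => Submodule.smul_mem _ _ (LinearMap.mem_range_self E' _))
  have hrank := LinearMap.finrank_range_add_finrank_ker E'
  rw [hker, hrange] at hrank
  have h5 : Module.finrank ℂ (⊤ : Submodule ℂ (↥((C \ B).erase a₀) → ℂ))
      = ((C \ B).erase a₀).card := by
    rw [finrank_top, Module.finrank_pi]
    exact Fintype.card_coe _
  have h6 : Module.finrank ℂ ↥(Submodule.comap (span ℂ (JPGen f C)).subtype
        (span ℂ (JPGen f B)))
      = Module.finrank ℂ ↥(span ℂ (JPGen f B)) :=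
    (Submodule.comapSubtypeEquivOfLe hBle).finrank_eq
  have h7 : ((C \ B).erase a₀).card + 1 = (C \ B).card := Finset.card_erase_add_one ha₀N
  have h8 : (C \ B).card + B.card = C.card := Finset.card_sdiff_add_card_eq_card hBsub
  omega

variable {l n : ℕ} (f : Fin n → Module.Dual ℂ (Fin l → ℂ))

lemma JPseries (hf0 : ∀ i, f i ≠ 0) (hprop : ∀ i j : Fin n, i ≠ j → ∀ a : ℂ, f i ≠ a • f j)
    {ℓ : ℕ} {c : ℕ → Finset (Fin n)} (hc : IsCompSeries f ℓ c) :
    Module.finrank ℂ (span ℂ (JPGen f Finset.univ)) + ℓ = n := by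
  obtain ⟨h1, hc1, htop, hstep⟩ := hc
  have key : ∀ i, 1 ≤ i → i ≤ ℓ →
      Module.finrank ℂ (span ℂ (JPGen f (c i))) + i = (c i).card := by
    intro i hi
    induction i, hi using Nat.le_induction with
    | base =>
      intro _
      obtain ⟨a, ha⟩ := Finset.card_eq_one.mp hc1
      have hbot : span ℂ (JPGen f (c 1)) ≤ ⊥ := by
        rw [span_le]
        rintro v ⟨hrel, hsupp, -⟩
        have hzero : v = 0 := by
          refine JPtwo f hf0 hprop hrel (x := a) (y := a) (fun i hi' => ?_)
          have := hsupp i hi'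
          rw [ha, Finset.mem_singleton] at this
          exact Or.inl this
        simp [hzero]
      rw [le_bot_iff] at hbot
      rw [hbot, finrank_bot]
      omega
    | succ m hm ih =>
      intro hle
      have hstep' := JPstep f hf0 hprop (hstep m hm (by omega))
      have := ih (by omega)
      omega
  have hfin := key ℓ h1 le_rfl
  rwa [htop, Finset.card_univ, Fintype.card_fin] at hfin

end JPproof

/-- Any two composition series of a hypersolvable central arrangement
have the same length: the length `ℓ(A)` is well defined. -/
theorem compSeries_length_well_defined (l n ℓ ℓ' : ℕ)
    (f : Fin n → Module.Dual ℂ (Fin l → ℂ))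
    (hf0 : ∀ i, f i ≠ 0)
    (hprop : ∀ i j : Fin n, i ≠ j → ∀ a : ℂ, f i ≠ a • f j)
    (c c' : ℕ → Finset (Fin n))
    (hc : IsCompSeries f ℓ c) (hc' : IsCompSeries f ℓ' c') :
    ℓ = ℓ' := by
  have h1 := JPseries f hf0 hprop hc
  have h2 := JPseries f hf0 hprop hc'
  omega
end

section
/- If a hypersolvable central arrangement A in ℂ^l admits a composition series of length ℓ, then ℓ ≥ r(A). -/
/-! Common notions for central hyperplane arrangements, given by a family
`f : ι → Module.Dual ℂ V` of defining linear functionals (one per hyperplane). -/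

variable {V : Type*} [AddCommGroup V] [Module ℂ V]

section AuxCompSeries

lemma auxVanish {ι : Type*} (f : ι → Module.Dual ℂ V) (S : Finset ι)
    {x : V} (hx : x ∈ S.inf fun i => LinearMap.ker (f i)) :
    ∀ g ∈ Submodule.span ℂ (f '' S), g x = 0 := by
  intro g hg
  have hle : Submodule.span ℂ (f '' S) ≤ LinearMap.ker ((Module.Dual.eval ℂ V) x) := by
    rw [Submodule.span_le]
    rintro - ⟨i, hi, rfl⟩
    have h2 : (S.inf fun i => LinearMap.ker (f i)) ≤ LinearMap.ker (f i) :=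
      Finset.inf_le (Finset.mem_coe.mp hi)
    simpa using h2 hx
  simpa using hle hg

lemma auxCorankStep [FiniteDimensional ℂ V] (g : Module.Dual ℂ V) (X : Submodule ℂ V) :
    Module.finrank ℂ (V ⧸ (LinearMap.ker g ⊓ X)) ≤ Module.finrank ℂ (V ⧸ X) + 1 := by
  have h1 := (LinearMap.ker g ⊓ X).finrank_quotient_add_finrank
  have h2 := X.finrank_quotient_add_finrank
  have key : Module.finrank ℂ ↥X ≤ Module.finrank ℂ ↥(LinearMap.ker g ⊓ X) + 1 := by
    have h3 := (g.domRestrict X).finrank_range_add_finrank_ker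
    have hker : LinearMap.ker (g.domRestrict X) =
        (LinearMap.ker g ⊓ X).comap X.subtype := by
      rw [LinearMap.ker_domRestrict, Submodule.comap_inf, Submodule.comap_subtype_self,
        inf_top_eq]
    have heq : Module.finrank ℂ ↥(LinearMap.ker (g.domRestrict X)) =
        Module.finrank ℂ ↥(LinearMap.ker g ⊓ X) := by
      rw [hker]
      exact LinearEquiv.finrank_eq (Submodule.comapSubtypeEquivOfLe inf_le_right)
    have hrange : Module.finrank ℂ ↥(LinearMap.range (g.domRestrict X)) ≤ 1 := by
      simpa using (LinearMap.range (g.domRestrict X)).finrank_le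
    omega
  omega

lemma auxCorankLeSpan {ι : Type*} [FiniteDimensional ℂ V]
    (f : ι → Module.Dual ℂ V) (S : Finset ι) :
    Module.finrank ℂ (V ⧸ S.inf fun i => LinearMap.ker (f i)) ≤
      Module.finrank ℂ ↥(Submodule.span ℂ (f '' S)) := by
  classical
  induction S using Finset.induction_on with
  | empty =>
      have : Subsingleton (V ⧸ (⊤ : Submodule ℂ V)) :=
        Submodule.Quotient.subsingleton_iff.mpr rfl
      simp [Module.finrank_zero_of_subsingleton]
  | @insert a S ha ih =>
      have himg : f '' ↑(insert a S) = insert (f a) (f '' ↑S) := by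
        rw [Finset.coe_insert, Set.image_insert_eq]
      rw [Finset.inf_insert, himg]
      by_cases h : f a ∈ Submodule.span ℂ (f '' ↑S)
      · have hle : (S.inf fun i => LinearMap.ker (f i)) ≤ LinearMap.ker (f a) :=
          fun x hx => LinearMap.mem_ker.mpr (auxVanish f S hx (f a) h)
        rw [inf_eq_right.mpr hle, Submodule.span_insert_eq_span h]
        exact ih
      · have hlt : Submodule.span ℂ (f '' ↑S) <
            Submodule.span ℂ (insert (f a) (f '' ↑S)) := by
          refine lt_of_le_of_ne (Submodule.span_mono (Set.subset_insert _ _)) fun he => ?_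
          exact h (he ▸ Submodule.subset_span (Set.mem_insert _ _))
        have hfr := Submodule.finrank_lt_finrank_of_lt hlt
        have hstep := auxCorankStep (f a) (S.inf fun i => LinearMap.ker (f i))
        omega

lemma auxExtStep {ι : Type*} [DecidableEq ι] [FiniteDimensional ℂ V]
    (f : ι → Module.Dual ℂ V)
    (hf0 : ∀ i, f i ≠ 0)
    (hprop : ∀ i j : ι, i ≠ j → ∀ a : ℂ, f i ≠ a • f j)
    {B C : Finset ι} (h : IsSolvableExtension f B C) :
    Module.finrank ℂ ↥(Submodule.span ℂ (f '' C)) ≤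
      Module.finrank ℂ ↥(Submodule.span ℂ (f '' B)) + 1 := by
  obtain ⟨hBC, -, hcomp, -⟩ := h
  obtain ⟨a, haC, haB⟩ := Finset.exists_of_ssubset hBC
  set W := Submodule.span ℂ (f '' ↑B) ⊔ Submodule.span ℂ {f a} with hW
  have hCW : ∀ c ∈ C, f c ∈ W := by
    intro c hc
    by_cases hcB : c ∈ B
    · exact Submodule.mem_sup_left (Submodule.subset_span ⟨c, hcB, rfl⟩)
    by_cases hca : c = a
    · subst hca
      exact Submodule.mem_sup_right (Submodule.subset_span rfl)
    · have hamem : a ∈ C \ B := Finset.mem_sdiff.mpr ⟨haC, haB⟩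
      have hcmem : c ∈ C \ B := Finset.mem_sdiff.mpr ⟨hc, hcB⟩
      obtain ⟨α, hαB, hspan⟩ := hcomp a hamem c hcmem (fun e => hca e.symm)
      obtain ⟨s, t, hst⟩ := Submodule.mem_span_pair.mp hspan
      have ht : t ≠ 0 := by
        rintro rfl
        have : f α = s • f a := by
          rw [← hst]; simp
        exact hprop α a (by rintro rfl; exact haB hαB) s this
      have hfc : f c = t⁻¹ • (f α - s • f a) := by
        have h2 : t • f c = f α - s • f a := by
          rw [eq_sub_iff_add_eq, add_comm]; exact hst
        rw [← h2, smul_smul, inv_mul_cancel₀ ht, one_smul]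
      rw [hfc]
      refine W.smul_mem _ (W.sub_mem ?_ (W.smul_mem _ ?_))
      · exact Submodule.mem_sup_left (Submodule.subset_span ⟨α, hαB, rfl⟩)
      · exact Submodule.mem_sup_right (Submodule.subset_span rfl)
  have hle : Submodule.span ℂ (f '' ↑C) ≤ W :=
    Submodule.span_le.mpr (by rintro - ⟨x, hx, rfl⟩; exact hCW x (Finset.mem_coe.mp hx))
  calc Module.finrank ℂ ↥(Submodule.span ℂ (f '' ↑C)) ≤ Module.finrank ℂ ↥W :=
        Submodule.finrank_mono hle
    _ ≤ Module.finrank ℂ ↥(Submodule.span ℂ (f '' ↑B)) +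
          Module.finrank ℂ ↥(Submodule.span ℂ ({f a} : Set (Module.Dual ℂ V))) :=
        Submodule.finrank_add_le_finrank_add_finrank _ _
    _ = Module.finrank ℂ ↥(Submodule.span ℂ (f '' ↑B)) + 1 := by
        rw [finrank_span_singleton (hf0 a)]

end AuxCompSeries

/-- The length of a composition series of a hypersolvable central
arrangement is at least the rank of the arrangement. -/
theorem compSeries_length_ge_rank (l n ℓ : ℕ)
    (f : Fin n → Module.Dual ℂ (Fin l → ℂ))
    (hf0 : ∀ i, f i ≠ 0)
    (hprop : ∀ i j : Fin n, i ≠ j → ∀ a : ℂ, f i ≠ a • f j)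
    (c : ℕ → Finset (Fin n)) (hc : IsCompSeries f ℓ c) :
    arrRank f ≤ ℓ := by
  obtain ⟨h1, hcard, huniv, hstep⟩ := hc
  have hchain : ∀ i, 1 ≤ i → i ≤ ℓ →
      Module.finrank ℂ ↥(Submodule.span ℂ (f '' ↑(c i))) ≤ i := by
    intro i
    induction i with
    | zero => omega
    | succ k ih =>
        intro _ hk
        rcases Nat.eq_zero_or_pos k with hk0 | hk1
        · subst hk0
          obtain ⟨a, hca⟩ := Finset.card_eq_one.mp hcard
          rw [hca]
          have : f '' ↑({a} : Finset (Fin n)) = {f a} := by simp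
          rw [this, finrank_span_singleton (hf0 a)]
        · have hse := hstep k hk1 (by omega)
          have := auxExtStep f hf0 hprop hse
          have := ih hk1 (by omega)
          omega
  have hfinal : Module.finrank ℂ ↥(Submodule.span ℂ (f '' ↑(c ℓ))) ≤ ℓ :=
    hchain ℓ h1 le_rfl
  refine csSup_le' ?_
  rintro - ⟨X, ⟨S, -, rfl⟩, rfl⟩
  calc arrCorank (S.inf fun i => LinearMap.ker (f i))
      ≤ Module.finrank ℂ ↥(Submodule.span ℂ (f '' ↑S)) := auxCorankLeSpan f S
    _ ≤ Module.finrank ℂ ↥(Submodule.span ℂ (f '' ↑(c ℓ))) := by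
        refine Submodule.finrank_mono (Submodule.span_mono (Set.image_mono ?_))
        rw [huniv]
        exact fun x _ => Finset.mem_coe.mpr (Finset.mem_univ x)
    _ ≤ ℓ := hfinal
end

section
/- If B ⊊ A is a solvable extension of central arrangements in ℂ^l, then r(B) ≤ r(A) ≤ r(B) + 1, where r denotes the rank of an arrangement. -/
/-! Common notions for central hyperplane arrangements, given by a family
`f : ι → Module.Dual ℂ V` of defining linear functionals (one per hyperplane). -/

variable {V : Type*} [AddCommGroup V] [Module ℂ V]

/-! Fix a hyperplane `a ∈ A ∖ B`. For every other `b ∈ A ∖ B`, completion gives `α ∈ B` with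
`f α ∈ span {f a, f b}`; as `f α` is not proportional to `f a`, this forces
`H_a ∩ H_α ⊆ H_b`. Hence every flat of `A` contains `Y ∩ H_a` for some flat `Y` of `B`, and
cutting with one more hyperplane raises the rank by at most one. -/

open Submodule LinearMap

section Corank

variable {W : Type*} [AddCommGroup W] [Module ℂ W] [FiniteDimensional ℂ W]

lemma arrCorank_add_finrank (X : Submodule ℂ W) :
    arrCorank X + Module.finrank ℂ X = Module.finrank ℂ W :=
  finrank_quotient_add_finrank X

lemma arrCorank_antitone : Antitone (arrCorank : Submodule ℂ W → ℕ) := by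
  intro X Y hXY
  have := finrank_mono hXY
  have := arrCorank_add_finrank X
  have := arrCorank_add_finrank Y
  omega

lemma arrCorank_inf_ker_le (X : Submodule ℂ W) (g : Module.Dual ℂ W) :
    arrCorank (X ⊓ ker g) ≤ arrCorank X + 1 := by
  have := arrCorank_add_finrank X
  have := arrCorank_add_finrank (X ⊓ ker g)
  have := finrank_sup_add_finrank_inf_eq X (ker g)
  have := finrank_le (X ⊔ ker g)
  have := finrank_range_add_finrank_ker g
  have : Module.finrank ℂ (range g) ≤ 1 := by simpa using finrank_le (range g)
  omega

end Corank

section Rank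

variable {ι : Type*} (f : ι → Module.Dual ℂ V)

lemma arrLatticeOn_finite (B : Finset ι) : (arrLatticeOn f B).Finite := by
  classical
  refine ((B.powerset.finite_toSet).image fun S => S.inf fun i => ker (f i)).subset ?_
  rintro X ⟨S, hSB, rfl⟩
  exact ⟨S, Finset.mem_powerset.mpr hSB, rfl⟩

lemma arrCorank_le_arrRankOn {B S : Finset ι} (hSB : S ⊆ B) :
    arrCorank (S.inf fun i => ker (f i)) ≤ arrRankOn f B :=
  le_csSup ((arrLatticeOn_finite f B).image _).bddAbove ⟨_, ⟨S, hSB, rfl⟩, rfl⟩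

lemma arrRankOn_le {B : Finset ι} {m : ℕ}
    (h : ∀ S ⊆ B, arrCorank (S.inf fun i => ker (f i)) ≤ m) : arrRankOn f B ≤ m := by
  refine csSup_le ⟨_, ⊤, ⟨∅, B.empty_subset, rfl⟩, rfl⟩ ?_
  rintro _ ⟨_, ⟨S, hSB, rfl⟩, rfl⟩
  exact h S hSB

lemma arrRankOn_mono {B C : Finset ι} (hBC : B ⊆ C) : arrRankOn f B ≤ arrRankOn f C :=
  arrRankOn_le f fun _ hSB => arrCorank_le_arrRankOn f (hSB.trans hBC)

end Rank

lemma ker_inf_ker_le_of_mem_span_pair {K M : Type*} [Field K] [AddCommGroup M] [Module K M]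
    {g h k : Module.Dual K M} (hg : g ∈ span K {h, k}) (hgh : ∀ c : K, g ≠ c • h) :
    ker h ⊓ ker g ≤ ker k := by
  obtain ⟨c, d, rfl⟩ := mem_span_pair.mp hg
  have hd : d ≠ 0 := by
    rintro rfl
    exact hgh c (by simp)
  intro x hx
  obtain ⟨hhx, hgx⟩ := mem_inf.mp hx
  simp only [mem_ker, LinearMap.add_apply, LinearMap.smul_apply, smul_eq_mul] at hhx hgx ⊢
  simpa [hhx, hd] using hgx

section Completion

variable {K M ι : Type*} [Field K] [AddCommGroup M] [Module K M]
  {f : ι → Module.Dual K M} {B : Finset ι} {a : ι}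

lemma exists_subset_ker_inf_le_ker (hprop : ∀ i j, i ≠ j → ∀ c : K, f i ≠ c • f j)
    (ha : a ∉ B) (hcompl : ∀ b ∉ B, b ≠ a → ∃ α ∈ B, f α ∈ span K {f a, f b}) (b : ι) :
    ∃ T ⊆ B, ker (f a) ⊓ (T.inf fun i => ker (f i)) ≤ ker (f b) := by
  classical
  by_cases hbB : b ∈ B
  · exact ⟨{b}, by simpa using hbB, by simp⟩
  by_cases hba : b = a
  · exact ⟨∅, B.empty_subset, by simp [hba]⟩
  obtain ⟨α, hαB, hα⟩ := hcompl b hbB hba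
  refine ⟨{α}, by simpa using hαB, ?_⟩
  simpa using ker_inf_ker_le_of_mem_span_pair hα
    (hprop α a (ne_of_mem_of_not_mem hαB ha))

lemma exists_subset_inf_ker_le (hprop : ∀ i j, i ≠ j → ∀ c : K, f i ≠ c • f j)
    (ha : a ∉ B) (hcompl : ∀ b ∉ B, b ≠ a → ∃ α ∈ B, f α ∈ span K {f a, f b})
    (S : Finset ι) :
    ∃ T ⊆ B, (T.inf fun i => ker (f i)) ⊓ ker (f a) ≤ S.inf fun i => ker (f i) := by
  classical
  choose T hTB hT using exists_subset_ker_inf_le_ker hprop ha hcompl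
  refine ⟨S.biUnion T, Finset.biUnion_subset.mpr fun b _ => hTB b, ?_⟩
  refine Finset.le_inf fun b hb => le_trans ?_ (hT b)
  rw [inf_comm]
  exact inf_le_inf_left _ (Finset.inf_mono (Finset.subset_biUnion_of_mem T hb))

end Completion

theorem solvableExtension_rank_general (l n : ℕ)
    (f : Fin n → Module.Dual ℂ (Fin l → ℂ))
    (hprop : ∀ i j : Fin n, i ≠ j → ∀ a : ℂ, f i ≠ a • f j)
    (B : Finset (Fin n))
    (hBA : IsSolvableExtension f B Finset.univ) :
    arrRankOn f B ≤ arrRank f ∧ arrRank f ≤ arrRankOn f B + 1 := by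
  obtain ⟨hBA, -, hcompl, -⟩ := hBA
  obtain ⟨a, -, ha⟩ := Finset.exists_of_ssubset hBA
  refine ⟨arrRankOn_mono f (Finset.subset_univ B), arrRankOn_le f fun S _ => ?_⟩
  obtain ⟨T, hTB, hT⟩ := exists_subset_inf_ker_le hprop ha
    (fun b hb hba => hcompl a (by simpa using ha) b (by simpa using hb) (Ne.symm hba)) S
  calc arrCorank (S.inf fun i => ker (f i))
      ≤ arrCorank ((T.inf fun i => ker (f i)) ⊓ ker (f a)) := arrCorank_antitone hT
    _ ≤ arrCorank (T.inf fun i => ker (f i)) + 1 := arrCorank_inf_ker_le _ _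
    _ ≤ arrRankOn f B + 1 := Nat.add_le_add_right (arrCorank_le_arrRankOn f hTB) 1

/-- If `B ⊊ A` is a solvable extension of central arrangements, then
`r(B) ≤ r(A) ≤ r(B) + 1`. (The ambient arrangement `A` is indexed by all of `Fin n`,
and `B` by a proper subset of the indices.) -/
theorem solvableExtension_rank (l n : ℕ)
    (f : Fin n → Module.Dual ℂ (Fin l → ℂ))
    (hf0 : ∀ i, f i ≠ 0)
    (hprop : ∀ i j : Fin n, i ≠ j → ∀ a : ℂ, f i ≠ a • f j)
    (B : Finset (Fin n))
    (hBA : IsSolvableExtension f B Finset.univ) :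
    arrRankOn f B ≤ arrRank f ∧ arrRank f ≤ arrRankOn f B + 1 :=
  solvableExtension_rank_general l n f hprop B hBA
end

section
/- Every supersolvable central arrangement in ℂ^l is hypersolvable. -/
/-! Common notions for central hyperplane arrangements, given by a family
`f : ι → Module.Dual ℂ V` of defining linear functionals (one per hyperplane). -/

variable {V : Type*} [AddCommGroup V] [Module ℂ V]

open Module Submodule

variable {V : Type*} [AddCommGroup V] [Module ℂ V]

/-- annihilator of a kernel is the span. -/
lemma dualAnn_ker (φ : Module.Dual ℂ V) :
    (LinearMap.ker φ).dualAnnihilator = (ℂ ∙ φ) := by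
  rcases eq_or_ne φ 0 with rfl | hφ
  · simp [Submodule.span_zero_singleton]
  · apply le_antisymm
    · intro ψ hψ
      rw [Submodule.mem_dualAnnihilator] at hψ
      obtain ⟨x0, hx0⟩ : ∃ x0, φ x0 = 1 := by
        obtain ⟨y, hy⟩ := DFunLike.ne_iff.mp hφ
        exact ⟨(φ y)⁻¹ • y, by simp [inv_mul_cancel₀ (by simpa using hy)]⟩
      have : ψ = (ψ x0) • φ := by
        ext x
        have hk : x - (φ x) • x0 ∈ LinearMap.ker φ := by simp [hx0]
        have := hψ _ hk
        simp only [map_sub, map_smul, smul_eq_mul, hx0, mul_one, sub_eq_zero] at this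
        simp [this, mul_comm]
      rw [this]
      exact Submodule.smul_mem _ _ (Submodule.mem_span_singleton_self φ)
    · rw [Submodule.span_singleton_le_iff_mem, Submodule.mem_dualAnnihilator]
      intro w hw; exact hw

lemma mem_span_of_ker_inf_ker_le [FiniteDimensional ℂ V] {φ ψ χ : Module.Dual ℂ V}
    (h : LinearMap.ker φ ⊓ LinearMap.ker ψ ≤ LinearMap.ker χ) :
    χ ∈ Submodule.span ℂ {φ, ψ} := by
  have h1 : χ ∈ (LinearMap.ker χ).dualAnnihilator := by
    rw [Submodule.mem_dualAnnihilator]; intro w hw; exact hw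
  have h2 := Submodule.dualAnnihilator_anti h h1
  rw [Subspace.dualAnnihilator_inf_eq, dualAnn_ker, dualAnn_ker] at h2
  rwa [Submodule.span_insert]

lemma li_triple {φ ψ χ : Module.Dual ℂ V} (hψ : ψ ≠ 0)
    (h12 : ∀ c : ℂ, φ ≠ c • ψ) (h3 : χ ∉ Submodule.span ℂ {φ, ψ}) :
    LinearIndependent ℂ ![φ, ψ, χ] := by
  rw [Fintype.linearIndependent_iff]
  intro g hg
  rw [Fin.sum_univ_three] at hg
  simp only [Matrix.cons_val_zero, Matrix.cons_val_one, Matrix.head_cons,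
    Matrix.cons_val_two, Matrix.tail_cons] at hg
  have hg2 : g 2 = 0 := by
    by_contra h2
    apply h3
    rw [Submodule.mem_span_pair]
    refine ⟨-((g 2)⁻¹ * g 0), -((g 2)⁻¹ * g 1), ?_⟩
    have h4 : g 2 • χ = -(g 0 • φ + g 1 • ψ) := eq_neg_of_add_eq_zero_right hg
    calc -((g 2)⁻¹ * g 0) • φ + -((g 2)⁻¹ * g 1) • ψ
        = (g 2)⁻¹ • (-(g 0 • φ + g 1 • ψ)) := by module
      _ = (g 2)⁻¹ • (g 2 • χ) := by rw [← h4]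
      _ = χ := by rw [smul_smul, inv_mul_cancel₀ h2, one_smul]
  rw [hg2, zero_smul, add_zero] at hg
  have hg0 : g 0 = 0 := by
    by_contra h0
    apply h12 (-((g 0)⁻¹ * g 1))
    have h4 : g 0 • φ = -(g 1 • ψ) := eq_neg_of_add_eq_zero_left hg
    calc φ = (g 0)⁻¹ • (g 0 • φ) := by rw [smul_smul, inv_mul_cancel₀ h0, one_smul]
      _ = (g 0)⁻¹ • (-(g 1 • ψ)) := by rw [h4]
      _ = -((g 0)⁻¹ * g 1) • ψ := by module
  rw [hg0, zero_smul, zero_add] at hg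
  have hg1 : g 1 = 0 := by
    rcases smul_eq_zero.mp hg with h | h
    · exact h
    · exact absurd h hψ
  intro i; fin_cases i <;> assumption
open Module Submodule in
lemma hyp_ker_finrank {V : Type*} [AddCommGroup V] [Module ℂ V] [FiniteDimensional ℂ V]
    {φ : Module.Dual ℂ V} (hφ : φ ≠ 0) :
    Module.finrank ℂ (LinearMap.ker φ) + 1 = Module.finrank ℂ V := by
  have hsurj : Function.Surjective φ := by
    obtain ⟨y, hy⟩ := DFunLike.ne_iff.mp hφ
    intro c
    have hy' : φ y ≠ 0 := by simpa using hy
    refine ⟨(c / φ y) • y, ?_⟩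
    simp only [map_smul, smul_eq_mul]
    field_simp
  have h1 := LinearMap.finrank_range_add_finrank_ker φ
  rw [LinearMap.range_eq_top.mpr hsurj, finrank_top, Module.finrank_self] at h1
  omega

open Module Submodule in
lemma hyp_finrank_dualAnn {V : Type*} [AddCommGroup V] [Module ℂ V]
    [FiniteDimensional ℂ V] (W : Submodule ℂ V) :
    Module.finrank ℂ W.dualAnnihilator = Module.finrank ℂ (V ⧸ W) :=
  (LinearEquiv.finrank_eq (Subspace.quotEquivAnnihilator W)).symm

open Module Submodule in
lemma hyp_ker_inf_le_of_mem_span {V : Type*} [AddCommGroup V] [Module ℂ V]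
    {φ ψ χ : Module.Dual ℂ V} (h : χ ∈ Submodule.span ℂ {φ, ψ}) :
    LinearMap.ker φ ⊓ LinearMap.ker ψ ≤ LinearMap.ker χ := by
  obtain ⟨s, t, hst⟩ := Submodule.mem_span_pair.mp h
  rintro x ⟨hx1, hx2⟩
  have hx1' : φ x = 0 := hx1
  have hx2' : ψ x = 0 := hx2
  have : χ x = 0 := by
    rw [← hst]; simp [hx1', hx2']
  exact this

/-- Every (nonempty) supersolvable central arrangement in `ℂ^l` is
hypersolvable. -/
theorem supersolvable_hypersolvable (l n : ℕ) (hn : 1 ≤ n)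
    (f : Fin n → Module.Dual ℂ (Fin l → ℂ))
    (hf0 : ∀ i, f i ≠ 0)
    (hprop : ∀ i j : Fin n, i ≠ j → ∀ a : ℂ, f i ≠ a • f j)
    (hss : Supersolvable f) :
    Hypersolvable f := by
  classical
  obtain ⟨X, hX0, hXr, hmod, hcor, hmono⟩ := hss
  set r := arrRank f with hr
  set W : Type := Fin l → ℂ with hW
  have hV : Module.finrank ℂ (Fin l → ℂ) = l := Module.finrank_fin_fun ℂ
  -- the lattice coranks are bounded by l
  have hbdd : BddAbove (arrCorank '' arrLattice f) := by
    refine ⟨l, ?_⟩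
    rintro x ⟨Y, _, rfl⟩
    have h1 := Submodule.finrank_quotient_add_finrank Y
    unfold arrCorank; omega
  -- rank is at least 1
  have hr1 : 1 ≤ r := by
    set i0 : Fin n := ⟨0, hn⟩
    have hker : (LinearMap.ker (f i0)) ∈ arrLattice f := by
      refine ⟨{i0}, Finset.subset_univ _, ?_⟩
      rw [Finset.inf_singleton]
    have hcor1 : arrCorank (LinearMap.ker (f i0)) = 1 := by
      have h1 := Submodule.finrank_quotient_add_finrank (LinearMap.ker (f i0))
      have h2 := hyp_ker_finrank (hf0 i0)
      unfold arrCorank; omega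
    calc (1 : ℕ) = arrCorank (LinearMap.ker (f i0)) := hcor1.symm
      _ ≤ r := le_csSup hbdd ⟨_, hker, rfl⟩
  -- dimension of the flag
  have hdim : ∀ k, k ≤ r → Module.finrank ℂ (X k) + k = l := by
    intro k hk
    have h1 := Submodule.finrank_quotient_add_finrank (X k)
    have h2 := hcor k hk
    unfold arrCorank at h2
    omega
  -- the composition series
  set c : ℕ → Finset (Fin n) :=
    fun k => Finset.univ.filter (fun i => X k ≤ LinearMap.ker (f i)) with hc
  have hmem : ∀ k i, i ∈ c k ↔ X k ≤ LinearMap.ker (f i) := by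
    intro k i; simp [hc]
  -- lattice elements that are proper are bounded by some kernel
  have hlat : ∀ {Y : Submodule ℂ (Fin l → ℂ)}, Y ∈ arrLattice f → Y ≠ ⊤ →
      ∃ i, Y ≤ LinearMap.ker (f i) := by
    rintro Y ⟨S, -, rfl⟩ hne
    rcases S.eq_empty_or_nonempty with rfl | ⟨i, hi⟩
    · simp at hne
    · exact ⟨i, Finset.inf_le hi⟩
  -- proper from finrank
  have hproper : ∀ {Y : Submodule ℂ (Fin l → ℂ)}, Module.finrank ℂ Y < l → Y ≠ ⊤ := by
    intro Y hY h
    rw [h, finrank_top, hV] at hY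
    omega
  refine ⟨r, c, hr1, ?_, ?_, ?_⟩
  · -- card of first term
    obtain ⟨S, -, hS⟩ := (hmod 1 hr1).1
    have hd1 : Module.finrank ℂ (X 1) + 1 = l := hdim 1 hr1
    have hX1ne : X 1 ≠ ⊤ := hproper (by omega)
    obtain ⟨i0, hi0⟩ : ∃ i, X 1 ≤ LinearMap.ker (f i) := hlat ⟨S, Finset.subset_univ _, hS⟩ hX1ne
    have heq : X 1 = LinearMap.ker (f i0) := by
      refine Submodule.eq_of_le_of_finrank_le hi0 ?_
      have h2 := hyp_ker_finrank (hf0 i0)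
      omega
    rw [Finset.card_eq_one]
    refine ⟨i0, ?_⟩
    ext j
    simp only [Finset.mem_singleton]
    rw [hmem, heq]
    constructor
    · intro hj
      by_contra hne
      have hj' : f j ∈ (LinearMap.ker (f i0)).dualAnnihilator := by
        rw [Submodule.mem_dualAnnihilator]
        intro w hw; exact hj hw
      rw [dualAnn_ker] at hj'
      obtain ⟨a, ha⟩ := Submodule.mem_span_singleton.mp hj'
      exact hprop j i0 hne a ha.symm
    · rintro rfl; exact le_rfl
  · -- last term is everything
    ext i
    simp only [Finset.mem_univ, iff_true]
    rw [hmem, hXr]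
    exact iInf_le _ i
  · -- each step is a solvable extension
    intro k hk1 hkr'
    have hkr : k ≤ r := le_of_lt hkr'
    have hk1r : k + 1 ≤ r := hkr'
    have hstep : X (k+1) ≤ X k := hmono k (k+1) (Nat.le_succ k) hk1r
    have hsub : c k ⊆ c (k+1) := by
      intro i hi
      rw [hmem] at hi ⊢
      exact le_trans hstep hi
    -- basic facts about elements of C \ B
    have hCB : ∀ {a : Fin n}, a ∈ c (k+1) \ c k →
        X (k+1) ≤ LinearMap.ker (f a) ∧ ¬ X k ≤ LinearMap.ker (f a) := by
      intro a ha
      rw [Finset.mem_sdiff, hmem, hmem] at ha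
      exact ha
    have hdk := hdim k hkr
    have hdk1 := hdim (k+1) hk1r
    -- finrank (X k ⊓ ker f a) < finrank (X k) for a outside c k
    have hinflt : ∀ {a : Fin n}, ¬ X k ≤ LinearMap.ker (f a) →
        Module.finrank ℂ ↥(X k ⊓ LinearMap.ker (f a)) < Module.finrank ℂ ↥(X k) := by
      intro a hna
      refine Submodule.finrank_lt_finrank_of_lt (lt_of_le_of_ne inf_le_left ?_)
      intro h
      exact hna (h ▸ inf_le_right)
    refine ⟨?_, ?_, ?_, ?_⟩
    · -- strict inclusion
      rw [Finset.ssubset_iff_of_subset hsub]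
      obtain ⟨S, -, hS⟩ := (hmod (k+1) hk1r).1
      by_contra hno
      push_neg at hno
      have hle : X k ≤ X (k+1) := by
        rw [hS]
        refine Finset.le_inf ?_
        intro i hi
        have hik1 : i ∈ c (k+1) := (hmem _ _).mpr (hS ▸ Finset.inf_le hi)
        exact (hmem k i).mp (hno i hik1)
      have : X k = X (k+1) := le_antisymm hle hstep
      have h1 := hcor k hkr
      have h2 := hcor (k+1) hk1r
      rw [this] at h1
      omega
    · -- closure
      intro α hα β hβ hne a ha
      have haf := hCB ha
      refine li_triple (hf0 β) (fun cc => hprop α β hne cc) ?_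
      intro hsp
      obtain ⟨s, t, hst⟩ := Submodule.mem_span_pair.mp hsp
      apply haf.2
      intro x hx
      have hxα : f α x = 0 := (hmem k α).mp hα hx
      have hxβ : f β x = 0 := (hmem k β).mp hβ hx
      have : f a x = 0 := by rw [← hst]; simp [hxα, hxβ]
      exact this
    · -- completion
      intro a ha b hb hab
      have haf := hCB ha
      have hbf := hCB hb
      have hY : (LinearMap.ker (f a) ⊓ LinearMap.ker (f b)) ∈ arrLattice f := by
        refine ⟨{a, b}, Finset.subset_univ _, ?_⟩
        rw [Finset.inf_insert, Finset.inf_singleton]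
      obtain ⟨S, -, hS⟩ := (hmod k hkr).2 _ hY
      -- dimension count
      have e1 := Submodule.finrank_sup_add_finrank_inf_eq (X k)
        (LinearMap.ker (f a) ⊓ LinearMap.ker (f b))
      have e2 : Module.finrank ℂ ↥(LinearMap.ker (f a) ⊓ LinearMap.ker (f b)) <
          Module.finrank ℂ ↥(LinearMap.ker (f a)) := by
        refine Submodule.finrank_lt_finrank_of_lt (lt_of_le_of_ne inf_le_left ?_)
        intro h
        have hle : LinearMap.ker (f a) ≤ LinearMap.ker (f b) := h ▸ inf_le_right
        have hb' : f b ∈ (LinearMap.ker (f a)).dualAnnihilator := by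
          rw [Submodule.mem_dualAnnihilator]
          intro w hw; exact hle hw
        rw [dualAnn_ker] at hb'
        obtain ⟨cc, hcc⟩ := Submodule.mem_span_singleton.mp hb'
        exact hprop b a hab.symm cc hcc.symm
      have e3 := hyp_ker_finrank (hf0 a)
      have e4 : Module.finrank ℂ (X (k+1)) ≤
          Module.finrank ℂ ↥(X k ⊓ (LinearMap.ker (f a) ⊓ LinearMap.ker (f b))) := by
        refine Submodule.finrank_mono (le_inf hstep (le_inf haf.1 hbf.1))
      have hZlt : Module.finrank ℂ
          ↥(X k ⊔ (LinearMap.ker (f a) ⊓ LinearMap.ker (f b))) < l := by omega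
      obtain ⟨α, hαle⟩ := hlat ⟨S, Finset.subset_univ _, hS⟩ (hproper hZlt)
      refine ⟨α, ?_, ?_⟩
      · rw [hmem]
        exact le_trans le_sup_left hαle
      · exact mem_span_of_ker_inf_ker_le (le_trans le_sup_right hαle)
    · -- solvability
      intro a ha b hb c' hc' hab hbc hac α hα β hβ γ hγ hspα hspβ hspγ
      right
      have haf := hCB ha
      have hbf := hCB hb
      have hcf := hCB hc'
      set K3 : Submodule ℂ (Fin l → ℂ) :=
        LinearMap.ker (f a) ⊓ LinearMap.ker (f b) ⊓ LinearMap.ker (f c') with hK3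
      set Z : Submodule ℂ (Fin l → ℂ) := X k ⊔ K3 with hZ
      -- dimension count: finrank Z ≥ l - 2
      have e1 := Submodule.finrank_sup_add_finrank_inf_eq (X k) K3
      have u1 := Submodule.finrank_sup_add_finrank_inf_eq
        (LinearMap.ker (f a)) (LinearMap.ker (f b))
      have u2 := Submodule.finrank_sup_add_finrank_inf_eq
        (LinearMap.ker (f a) ⊓ LinearMap.ker (f b)) (LinearMap.ker (f c'))
      have u1' := Submodule.finrank_le (LinearMap.ker (f a) ⊔ LinearMap.ker (f b))
      have u2' := Submodule.finrank_le
        ((LinearMap.ker (f a) ⊓ LinearMap.ker (f b)) ⊔ LinearMap.ker (f c'))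
      rw [← hK3] at u2
      have ea := hyp_ker_finrank (hf0 a)
      have eb := hyp_ker_finrank (hf0 b)
      have ec := hyp_ker_finrank (hf0 c')
      have einf : Module.finrank ℂ ↥(X k ⊓ K3) ≤
          Module.finrank ℂ ↥(X k ⊓ LinearMap.ker (f a)) := by
        refine Submodule.finrank_mono (inf_le_inf_left _ ?_)
        exact le_trans inf_le_left inf_le_left
      have elt := hinflt haf.2
      rw [hV] at u1' u2'
      have hZge : l ≤ Module.finrank ℂ Z + 2 := by
        rw [hZ]; omega
      -- corank of Z is at most 2
      have hquot := Submodule.finrank_quotient_add_finrank Z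
      have hann : Module.finrank ℂ Z.dualAnnihilator ≤ 2 := by
        rw [hyp_finrank_dualAnn]; omega
      -- the three functionals vanish on Z
      have hvan : ∀ (δ : Fin n), δ ∈ c k →
          ∀ (i j : Fin n), f δ ∈ Submodule.span ℂ {f i, f j} →
          LinearMap.ker (f a) ⊓ LinearMap.ker (f b) ⊓ LinearMap.ker (f c') ≤
            LinearMap.ker (f i) ⊓ LinearMap.ker (f j) →
          f δ ∈ Z.dualAnnihilator := by
        intro δ hδ i j hsp hle
        rw [Submodule.mem_dualAnnihilator]
        intro w hw
        have hZle : Z ≤ LinearMap.ker (f δ) := by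
          refine sup_le ((hmem k δ).mp hδ) ?_
          exact le_trans hle (hyp_ker_inf_le_of_mem_span hsp)
        exact hZle hw
      have hsple : Submodule.span ℂ ({f α, f β, f γ} : Set (Module.Dual ℂ (Fin l → ℂ))) ≤
          Z.dualAnnihilator := by
        rw [Submodule.span_le]
        rintro x (rfl | rfl | rfl)
        · exact hvan α hα a b hspα (le_inf (le_trans inf_le_left inf_le_left)
            (le_trans inf_le_left inf_le_right))
        · exact hvan β hβ b c' hspβ (le_inf (le_trans inf_le_left inf_le_right) inf_le_right)
        · exact hvan γ hγ a c' hspγ (le_inf (le_trans inf_le_left inf_le_left) inf_le_right)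
      calc Module.finrank ℂ (Submodule.span ℂ ({f α, f β, f γ} : Set (Module.Dual ℂ (Fin l → ℂ))))
          ≤ Module.finrank ℂ Z.dualAnnihilator := Submodule.finrank_mono hsple
        _ ≤ 2 := hann
end
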